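/- arXiv:1507.05295 — 7 statements merged into one kernel-verified Lean document; each statement's English description precedes it below -/
import Mathlib

section
/- Let n ∈ ℕ and let u = (u₁,…,uₙ), v = (v₁,…,vₙ) ∈ ℝⁿ have all components positive. Assume v₁ ≤ 1, u_i + v_{i+1} ≤ 1 for all i ∈ {1,…,n−1}, and uₙ < 1. Then w₁ > 0, …, wₙ > 0, where w₋₁ := w₀ := 1 and w_k := w_{k−1} − u_k v_k w_{k−2} for k ∈ {1,…,n}; consequently, all eigenvalues of the two-diagonal matrix A(u,v) are smaller than 1. -/
/-!
Let `μ ≥ 1` and let `q` solve `q₁ = μ q₀`, `q_{k+2} = μ q_{k+1} - u_k v_k q_k` with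
`q₀ > 0`. The column-sum conditions propagate `v_k q_k ≤ q_{k+1}`, whence
`q_{k+2} ≥ (1 - u_k) q_{k+1} > 0`. With `μ = 1` this is the positivity of `w`. An eigenvector
`x` of `A(u,v)` for a real eigenvalue `r` gives the solution `q_k = x_k u_0 ⋯ u_{k-1}` for
`μ = r`, which vanishes at `n + 1`; so `r ≥ 1` would force `q₀ = 0` (after a sign change) and
then `x = 0`. The eigenvalues are real because `diag(c) A` is symmetric for
`c_k = ∏_{i<k} u_i / v_i`, so that `A` is conjugate to a real symmetric matrix by `diag(√c)`.
-/

/-- The two-diagonal matrix `A(u,v)` (0-indexed: entry `(k, k+1)` is `u k`, which is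
`u_{k+1}` in the paper's 1-indexed notation, and entry `(k+1, k)` is `v k`). -/
def twoDiag (n : ℕ) (u v : ℕ → ℝ) : Matrix (Fin (n + 1)) (Fin (n + 1)) ℝ :=
  fun i j =>
    if (j : ℕ) = (i : ℕ) + 1 then u (i : ℕ)
    else if (i : ℕ) = (j : ℕ) + 1 then v (j : ℕ) else 0

open Matrix Finset Polynomial

theorem Matrix.im_eq_zero_of_mem_spectrum_of_isSymm_diagonal_mul {ι : Type*} [Fintype ι]
    [DecidableEq ι] {A : Matrix ι ι ℝ} {w : ι → ℝ} (hw : ∀ i, 0 < w i)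
    (hA : (diagonal w * A).IsSymm) {μ : ℂ}
    (hμ : μ ∈ spectrum ℂ (A.map ((↑) : ℝ → ℂ))) : μ.im = 0 := by
  set d : ι → ℝ := fun i => √(w i)
  have hd : ∀ i, d i ≠ 0 := fun i => (Real.sqrt_pos.2 (hw i)).ne'
  let D : (Matrix ι ι ℝ)ˣ := ⟨diagonal d, diagonal d⁻¹, by simp [hd], by simp [hd]⟩
  set S : Matrix ι ι ℝ := D * A * (D⁻¹ : (Matrix ι ι ℝ)ˣ)
  have hS : S.IsSymm := by
    refine IsSymm.ext fun i j => ?_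
    have hij := hA.apply i j
    simp only [diagonal_mul] at hij
    simp only [S, D, Units.inv_mk, diagonal_mul, mul_diagonal, Pi.inv_apply]
    rw [← Real.sq_sqrt (hw i).le, ← Real.sq_sqrt (hw j).le] at hij
    field_simp [hd i, hd j]
    linear_combination hij
  have hAS : A = (D⁻¹ : (Matrix ι ι ℝ)ˣ) * S * D := by
    simp only [S, mul_assoc, Units.inv_mul, mul_one]
    rw [← mul_assoc, Units.inv_mul, one_mul]
  let φ : Matrix ι ι ℝ →+* Matrix ι ι ℂ := Complex.ofRealHom.mapMatrix
  let U : (Matrix ι ι ℂ)ˣ := Units.map φ D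
  have hsim : A.map ((↑) : ℝ → ℂ) =
      (↑U⁻¹ : Matrix ι ι ℂ) * S.map ((↑) : ℝ → ℂ) * (U : Matrix ι ι ℂ) := by
    change φ A = _
    conv_lhs => rw [hAS]
    simp only [map_mul, U, Units.coe_map, Units.coe_map_inv]
    rfl
  rw [hsim, spectrum.units_conjugate',
    ((isHermitian_iff_isSymm.2 hS).map _ fun _ => by simp).spectrum_eq_image_range] at hμ
  obtain ⟨_, _, rfl⟩ := hμ
  simp

theorem Matrix.mem_spectrum_map_iff {n K L : Type*} [Fintype n] [DecidableEq n] [Field K]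
    [Field L] (f : K →+* L) {A : Matrix n n K} {r : K} :
    f r ∈ spectrum L (A.map f) ↔ r ∈ spectrum K A := by
  rw [mem_spectrum_iff_isRoot_charpoly, mem_spectrum_iff_isRoot_charpoly, charpoly_map,
    isRoot_map_iff f.injective]

theorem Matrix.exists_mulVec_eq_smul_of_mem_spectrum {n K : Type*} [Fintype n] [DecidableEq n]
    [Field K] {A : Matrix n n K} {r : K} (h : r ∈ spectrum K A) :
    ∃ x ≠ 0, A *ᵥ x = r • x := by
  rw [← spectrum_toLin', ← Module.End.hasEigenvalue_iff_mem_spectrum] at h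
  obtain ⟨x, hx⟩ := h.exists_hasEigenvector
  exact ⟨x, hx.2, by simpa using hx.apply_eq_smul⟩

/-- Column `j` of `twoDiag n u v` sums to `u (j - 1) + v j` (to `v 0` for `j = 0` and to
`u (n - 1)` for `j = n`): all column sums are at most `1`, the last one is less than `1`. -/
structure ColSumCond (n : ℕ) (u v : ℕ → ℝ) : Prop where
  v_zero_le_one : v 0 ≤ 1
  add_le_one : ∀ i, i + 1 < n → u i + v (i + 1) ≤ 1
  last_lt_one : u (n - 1) < 1

theorem ColSumCond.lt_one {n : ℕ} {u v : ℕ → ℝ} (h : ColSumCond n u v)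
    (hv : ∀ k < n, 0 < v k) : ∀ k < n, u k < 1 := by
  intro k hk
  rcases Nat.lt_or_ge (k + 1) n with hk' | hk'
  · linarith [h.add_le_one k hk', hv (k + 1) hk']
  · rw [show k = n - 1 by omega]
    exact h.last_lt_one

/-- With `q 0 = 1`, the solution is the sequence of leading principal minors of
`μ - twoDiag n u v`, ending with its determinant `q (n + 1)`. -/
structure MinorRec (n : ℕ) (u v : ℕ → ℝ) (μ : ℝ) (q : ℕ → ℝ) : Prop where
  one : q 1 = μ * q 0
  add_two : ∀ k < n, q (k + 2) = μ * q (k + 1) - u k * v k * q k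

namespace MinorRec

variable {n : ℕ} {u v q : ℕ → ℝ} {μ : ℝ}

theorem neg (h : MinorRec n u v μ q) : MinorRec n u v μ (-q) where
  one := by simp [h.one]
  add_two k hk := by simp only [Pi.neg_apply, h.add_two k hk]; ring

theorem pos (h : MinorRec n u v μ q) (hcol : ColSumCond n u v) (hμ : 1 ≤ μ)
    (hu : ∀ k < n, 0 ≤ u k) (hv : ∀ k < n, 0 < v k) (hq0 : 0 < q 0) :
    ∀ k ≤ n, 0 < q (k + 1) := by
  have step : ∀ k < n, 0 ≤ q (k + 1) → v k * q k ≤ q (k + 1) →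
      (1 - u k) * q (k + 1) ≤ q (k + 2) := by
    intro k hk hq hvq
    rw [h.add_two k hk]
    nlinarith [mul_le_mul_of_nonneg_left hvq (hu k hk)]
  have invariant : ∀ k < n, 0 < q (k + 1) ∧ v k * q k ≤ q (k + 1) := by
    intro k hk
    induction k with
    | zero => constructor <;> nlinarith [h.one, hcol.v_zero_le_one]
    | succ k ih =>
      obtain ⟨hpos, hle⟩ := ih (by omega)
      have hvq : v (k + 1) * q (k + 1) ≤ q (k + 2) := calc
        v (k + 1) * q (k + 1) ≤ (1 - u k) * q (k + 1) := by
          gcongr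
          linarith [hcol.add_le_one k hk]
        _ ≤ q (k + 2) := step k (by omega) hpos.le hle
      exact ⟨(mul_pos (hv _ hk) hpos).trans_le hvq, hvq⟩
  rintro (_ | k) hk
  · nlinarith [h.one]
  · obtain ⟨hpos, hle⟩ := invariant k hk
    calc 0 < (1 - u k) * q (k + 1) := mul_pos (by linarith [hcol.lt_one hv k hk]) hpos
      _ ≤ q (k + 2) := step k hk hpos.le hle

theorem eq_zero_of_apply_zero (h : MinorRec n u v μ q) (hq0 : q 0 = 0) :
    ∀ k ≤ n + 1, q k = 0 := by
  have pairs : ∀ k ≤ n, q k = 0 ∧ q (k + 1) = 0 := by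
    intro k hk
    induction k with
    | zero => simp [hq0, h.one]
    | succ k ih =>
      obtain ⟨h0, h1⟩ := ih (by omega)
      simp [h1, h.add_two k (by omega), h0]
  rintro (_ | k) hk
  · exact hq0
  · exact (pairs k (by omega)).2

theorem eq_zero (h : MinorRec n u v μ q) (hcol : ColSumCond n u v) (hμ : 1 ≤ μ)
    (hu : ∀ k < n, 0 ≤ u k) (hv : ∀ k < n, 0 < v k) (hlast : q (n + 1) = 0) :
    ∀ k ≤ n + 1, q k = 0 := by
  refine h.eq_zero_of_apply_zero ?_
  rcases lt_trichotomy (q 0) 0 with hq0 | hq0 | hq0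
  · have := h.neg.pos hcol hμ hu hv (by simpa using hq0) n le_rfl
    simp [hlast] at this
  · exact hq0
  · have := h.pos hcol hμ hu hv hq0 n le_rfl
    simp [hlast] at this

end MinorRec

def extendByZero {m : ℕ} (x : Fin m → ℝ) (k : ℕ) : ℝ :=
  if h : k < m then x ⟨k, h⟩ else 0

theorem extendByZero_of_le {m : ℕ} (x : Fin m → ℝ) {k : ℕ} (hk : m ≤ k) :
    extendByZero x k = 0 :=
  dif_neg (by omega)

section TwoDiag

variable {n : ℕ} {u v : ℕ → ℝ}

theorem twoDiag_mulVec_eq_sum (x : Fin (n + 1) → ℝ) (i : Fin (n + 1)) :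
    (twoDiag n u v *ᵥ x) i = u i * extendByZero x (i + 1) +
      ∑ j ∈ range (n + 1), if (i : ℕ) = j + 1 then v j * extendByZero x j else 0 := by
  have hsplit : ∀ j : Fin (n + 1), twoDiag n u v i j * x j =
      (if (j : ℕ) = i + 1 then u i * extendByZero x j else 0) +
        if (i : ℕ) = j + 1 then v j * extendByZero x j else 0 := by
    intro j
    simp only [twoDiag, extendByZero, dif_pos j.isLt]
    split_ifs <;> first | omega | ring
  simp only [mulVec, dotProduct, hsplit, sum_add_distrib,
    Fin.sum_univ_eq_sum_range (fun j => if j = (i : ℕ) + 1 then u i * extendByZero x j else 0),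
    Fin.sum_univ_eq_sum_range (fun j => if (i : ℕ) = j + 1 then v j * extendByZero x j else 0),
    sum_ite_eq', mem_range]
  split_ifs with h
  · rfl
  · rw [extendByZero_of_le x (by omega), mul_zero]

theorem twoDiag_mulVec_zero (x : Fin (n + 1) → ℝ) :
    (twoDiag n u v *ᵥ x) 0 = u 0 * extendByZero x 1 := by
  simp [twoDiag_mulVec_eq_sum]

theorem twoDiag_mulVec_succ (x : Fin (n + 1) → ℝ) {k : ℕ} (hk : k < n) :
    (twoDiag n u v *ᵥ x) ⟨k + 1, by omega⟩ =
      u (k + 1) * extendByZero x (k + 2) + v k * extendByZero x k := by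
  simp [twoDiag_mulVec_eq_sum, sum_ite_eq, show k < n + 1 by omega]

theorem twoDiag_isSymm_diagonal_mul (hv : ∀ k < n, v k ≠ 0) :
    (diagonal (fun i : Fin (n + 1) => ∏ k ∈ range i, u k / v k) * twoDiag n u v).IsSymm := by
  refine IsSymm.ext fun i j => ?_
  simp only [diagonal_mul, twoDiag]
  split_ifs with hij _ hji <;> try omega
  · rw [hij, prod_range_succ]
    field_simp [hv j (by omega)]
  · rw [hji, prod_range_succ]
    field_simp [hv i (by omega)]
  · simp

theorem im_eq_zero_of_mem_spectrum_twoDiag (hu : ∀ k < n, 0 < u k) (hv : ∀ k < n, 0 < v k)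
    {μ : ℂ} (hμ : μ ∈ spectrum ℂ ((twoDiag n u v).map (fun r => (r : ℂ)))) : μ.im = 0 :=
  im_eq_zero_of_mem_spectrum_of_isSymm_diagonal_mul
    (fun i => prod_pos fun k hk =>
      have hk : k < n := (mem_range.1 hk).trans_le i.is_le
      div_pos (hu k hk) (hv k hk))
    (twoDiag_isSymm_diagonal_mul fun k hk => (hv k hk).ne') hμ

theorem lt_one_of_mem_spectrum_twoDiag (hcol : ColSumCond n u v) (hu : ∀ k < n, 0 < u k)
    (hv : ∀ k < n, 0 < v k) {r : ℝ} (hr : r ∈ spectrum ℝ (twoDiag n u v)) : r < 1 := by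
  obtain ⟨x, hx0, hx⟩ := exists_mulVec_eq_smul_of_mem_spectrum hr
  by_contra! hr1
  set X := extendByZero x
  set P : ℕ → ℝ := fun k => ∏ i ∈ range k, u i
  have row_zero : u 0 * X 1 = r * X 0 := by
    simpa [twoDiag_mulVec_zero, X, extendByZero] using congrFun hx 0
  have row_succ : ∀ k < n, u (k + 1) * X (k + 2) + v k * X k = r * X (k + 1) := by
    intro k hk
    simpa [twoDiag_mulVec_succ x hk, X, extendByZero, show k + 1 < n + 1 by omega]
      using congrFun hx ⟨k + 1, by omega⟩
  have hrec : MinorRec n u v r (fun k => X k * P k) := by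
    refine ⟨by simpa [P, mul_comm] using row_zero, fun k hk => ?_⟩
    simp only [P, prod_range_succ]
    linear_combination (∏ i ∈ range k, u i) * u k * row_succ k hk
  have hzero := hrec.eq_zero hcol hr1 (fun k hk => (hu k hk).le) hv
    (by simp [X, extendByZero_of_le])
  refine hx0 (funext fun i => ?_)
  have hP : P i ≠ 0 :=
    prod_ne_zero_iff.2 fun k hk => (hu k ((mem_range.1 hk).trans_le i.is_le)).ne'
  have hXi := hzero i (by omega)
  simpa [X, extendByZero, hP, i.is_le] using hXi

end TwoDiag

theorem stmt1_general (n : ℕ) (u v : ℕ → ℝ)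
    (hu : ∀ k < n, 0 < u k) (hv : ∀ k < n, 0 < v k)
    (hv1 : v 0 ≤ 1)
    (hmid : ∀ i : ℕ, i + 1 < n → u i + v (i + 1) ≤ 1)
    (hun : u (n - 1) < 1)
    (w : ℕ → ℝ) (hw0 : w 0 = 1) (hw1 : w 1 = 1)
    (hwrec : ∀ k < n, w (k + 2) = w (k + 1) - u k * v k * w k) :
    (∀ k < n, 0 < w (k + 2)) ∧
    (∀ μ ∈ spectrum ℂ ((twoDiag n u v).map (fun r => (r : ℂ))), μ.im = 0 ∧ μ.re < 1) := by
  have hcol : ColSumCond n u v := ⟨hv1, hmid, hun⟩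
  have hw : MinorRec n u v 1 w :=
    ⟨by rw [hw0, hw1, one_mul], fun k hk => by rw [hwrec k hk, one_mul]⟩
  refine ⟨fun k hk => ?_, fun μ hμ => ?_⟩
  · exact hw.pos hcol le_rfl (fun k hk => (hu k hk).le) hv (by rw [hw0]; exact one_pos)
      (k + 1) hk
  · have him : μ.im = 0 := im_eq_zero_of_mem_spectrum_twoDiag hu hv hμ
    have hre : μ.re ∈ spectrum ℝ (twoDiag n u v) := by
      have hμ_eq : (μ.re : ℂ) = μ := Complex.ext rfl (by simp [him])
      rw [← mem_spectrum_map_iff Complex.ofRealHom, Complex.ofRealHom_eq_coe, hμ_eq]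
      exact hμ
    exact ⟨him, lt_one_of_mem_spectrum_twoDiag hcol hu hv hre⟩

/-- If `v₁ ≤ 1`, `uᵢ + v_{i+1} ≤ 1` for `i ∈ {1,…,n-1}` and `uₙ < 1`
(in the paper's 1-indexed notation; here `u k = u_{k+1}`, `v k = v_{k+1}`), then
`w₁, …, wₙ > 0` (here `w (k+1)` is the paper's `w_k`, `w 0 = w 1 = 1`), and consequently
all eigenvalues of `A(u,v)` (which are real) are smaller than `1`. -/
theorem stmt1 (n : ℕ) (hn : 1 ≤ n) (u v : ℕ → ℝ)
    (hu : ∀ k < n, 0 < u k) (hv : ∀ k < n, 0 < v k)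
    (hv1 : v 0 ≤ 1)
    (hmid : ∀ i : ℕ, i + 1 < n → u i + v (i + 1) ≤ 1)
    (hun : u (n - 1) < 1)
    (w : ℕ → ℝ) (hw0 : w 0 = 1) (hw1 : w 1 = 1)
    (hwrec : ∀ k < n, w (k + 2) = w (k + 1) - u k * v k * w k) :
    (∀ k < n, 0 < w (k + 2)) ∧
    (∀ μ ∈ spectrum ℂ ((twoDiag n u v).map (fun r => (r : ℂ))), μ.im = 0 ∧ μ.re < 1) :=
  stmt1_general n u v hu hv hv1 hmid hun w hw0 hw1 hwrec
end

section
/- Let n ∈ ℕ and let u = (u₁,…,uₙ), v = (v₁,…,vₙ) ∈ ℝⁿ have all components positive. Then the two-diagonal matrix A(u,v) has an eigenvector c = (c₀,…,cₙ) ∈ ℝ^{n+1} all of whose components are positive, whose corresponding eigenvalue λ is a positive real number. -/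
/-- Candidate eigenvector components, as functions of the eigenvalue `lam`. -/
noncomputable def cseq (u v : ℕ → ℝ) (lam : ℝ) : ℕ → ℝ
  | 0 => 1
  | 1 => lam / u 0
  | (k+2) => (lam * cseq u v lam (k+1) - v k * cseq u v lam k) / u (k+1)

lemma cseq_cont (u v : ℕ → ℝ) : ∀ k, Continuous fun lam => cseq u v lam k := by
  intro k
  induction k using Nat.strong_induction_on with
  | _ k ih =>
    match k with
    | 0 => simpa [cseq] using continuous_const
    | 1 =>
      simp only [cseq]
      exact continuous_id.div_const _
    | (k+2) =>
      simp only [cseq]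
      exact (((continuous_id.mul (ih (k+1) (by omega))).sub
        (continuous_const.mul (ih k (by omega)))).div_const _)

/-- The matrix `A(u,v)` has an eigenvector with positive components
whose eigenvalue is a positive real number. -/
theorem stmt2 (n : ℕ) (hn : 1 ≤ n) (u v : ℕ → ℝ)
    (hu : ∀ k < n, 0 < u k) (hv : ∀ k < n, 0 < v k) :
    ∃ (c : Fin (n + 1) → ℝ) (lam : ℝ), 0 < lam ∧ (∀ i, 0 < c i) ∧
      (twoDiag n u v).mulVec c = lam • c := by
  obtain ⟨p, rfl⟩ : ∃ p, n = p + 1 := ⟨n - 1, by omega⟩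
  clear hn
  set C : ℝ → ℕ → ℝ := cseq u v with hC
  have hC0 : ∀ lam, C lam 0 = 1 := fun lam => rfl
  have hC1 : ∀ lam, C lam 1 = lam / u 0 := fun lam => rfl
  have hC2 : ∀ lam k, C lam (k+2) = (lam * C lam (k+1) - v k * C lam k) / u (k+1) :=
    fun lam k => rfl
  -- the big constant L
  set S : ℝ := ∑ k ∈ Finset.range (p+1), u k * v k with hSdef
  have hS0 : 0 ≤ S := Finset.sum_nonneg fun k hk =>
    (mul_pos (hu k (Finset.mem_range.mp hk)) (hv k (Finset.mem_range.mp hk))).le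
  set L : ℝ := 2 * Real.sqrt (1 + S) with hLdef
  have hL2 : L ^ 2 = 4 * (1 + S) := by
    rw [hLdef, mul_pow, Real.sq_sqrt (by linarith)]; ring
  have hLpos : 0 < L := by
    rw [hLdef]
    have : 0 < Real.sqrt (1 + S) := Real.sqrt_pos.mpr (by linarith)
    linarith
  have hterm : ∀ k < p + 1, u k * v k ≤ S := by
    intro k hk
    exact Finset.single_le_sum (f := fun k => u k * v k)
      (fun i hi => (mul_pos (hu i (Finset.mem_range.mp hi)) (hv i (Finset.mem_range.mp hi))).le)
      (Finset.mem_range.mpr hk)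
  have huvL : ∀ k < p + 1, 4 * (u k * v k) ≤ L ^ 2 := by
    intro k hk; have := hterm k hk; rw [hL2]; linarith
  -- positivity at L
  have HL : ∀ k < p + 1, 0 < C L k ∧ L / 2 * C L k ≤ u k * C L (k+1) := by
    intro k
    induction k with
    | zero =>
      intro _
      constructor
      · rw [hC0]; norm_num
      · rw [hC0, hC1, mul_div_cancel₀ _ (hu 0 (by omega)).ne']
        linarith
    | succ k ih =>
      intro hk
      obtain ⟨h1, h2⟩ := ih (by omega)
      have huk : 0 < u k := hu k (by omega)
      have huk1 : 0 < u (k+1) := hu (k+1) hk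
      have hvk : 0 < v k := hv k (by omega)
      have hck1 : 0 < C L (k+1) := by nlinarith
      have h4 : 4 * (u k * v k) ≤ L ^ 2 := huvL k (by omega)
      constructor
      · exact hck1
      · rw [hC2, mul_div_cancel₀ _ huk1.ne']
        -- need : L/2 * C L (k+1) ≤ L * C L (k+1) - v k * C L k
        -- from h2 : L/2 * C L k ≤ u k * C L (k+1) and 4 u k v k ≤ L²
        nlinarith [mul_le_mul_of_nonneg_left h2 hvk.le,
          mul_le_mul_of_nonneg_right h4 hck1.le]
  have posL : ∀ k ≤ p + 1, 0 < C L k := by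
    intro k hk
    rcases Nat.lt_or_ge k (p+1) with h | h
    · exact (HL k h).1
    · have hkp : k = p + 1 := by omega
      subst hkp
      obtain ⟨h1, h2⟩ := HL p (by omega)
      have := hu p (by omega)
      nlinarith
  -- the set T and λ*
  set T : Set ℝ := Set.Icc 0 L ∩ ⋃ k ∈ Set.Iic (p+1), {lam | C lam k ≤ 0} with hTdef
  have hmemT : ∀ lam, lam ∈ T ↔ (0 ≤ lam ∧ lam ≤ L) ∧ ∃ k ≤ p + 1, C lam k ≤ 0 := by
    intro lam
    simp [hTdef, Set.mem_Icc, Set.mem_iUnion]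
  have hTclosed : IsClosed T :=
    isClosed_Icc.inter ((Set.finite_Iic _).isClosed_biUnion
      (fun k _ => isClosed_le (by rw [hC]; exact cseq_cont u v k) continuous_const))
  have hT0 : (0:ℝ) ∈ T := by
    rw [hmemT]
    refine ⟨⟨le_refl 0, hLpos.le⟩, 1, by omega, ?_⟩
    rw [hC1]; simp
  have hTbdd : BddAbove T := ⟨L, fun x hx => ((hmemT x).1 hx).1.2⟩
  set lamstar : ℝ := sSup T with hlsdef
  have hstarT : lamstar ∈ T := hTclosed.csSup_mem ⟨0, hT0⟩ hTbdd
  have hstar_nonneg : 0 ≤ lamstar := ((hmemT _).1 hstarT).1.1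
  have hstar_le : lamstar ≤ L := ((hmemT _).1 hstarT).1.2
  have hLnotT : L ∉ T := by
    intro h
    obtain ⟨_, k, hk, hc⟩ := (hmemT L).1 h
    exact absurd (posL k hk) (not_lt.mpr hc)
  have hstar_lt : lamstar < L := lt_of_le_of_ne hstar_le (fun h => hLnotT (h ▸ hstarT))
  -- positivity strictly above λ*
  have hpos_gt : ∀ lam, lamstar < lam → lam ≤ L → ∀ k ≤ p + 1, 0 < C lam k := by
    intro lam h1 h2 k hk
    by_contra hc
    push_neg at hc
    have hmem : lam ∈ T := (hmemT lam).2 ⟨⟨le_trans hstar_nonneg h1.le, h2⟩, k, hk, hc⟩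
    exact absurd (le_csSup hTbdd hmem) (not_le.mpr h1)
  -- nonnegativity at λ*
  have hnn_star : ∀ k ≤ p + 1, 0 ≤ C lamstar k := by
    intro k hk
    have hcont : Filter.Tendsto (fun lam => C lam k) (nhdsWithin lamstar (Set.Ioi lamstar))
        (nhds (C lamstar k)) :=
      ((cseq_cont u v k).tendsto lamstar).mono_left nhdsWithin_le_nhds
    refine ge_of_tendsto hcont ?_
    filter_upwards [Ioc_mem_nhdsGT_of_mem ⟨le_refl lamstar, hstar_lt⟩] with x hx
    exact (hpos_gt x hx.1 hx.2 k hk).le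
  -- zero propagation
  have zp : ∀ lam : ℝ, ∀ j, j + 1 ≤ p + 1 → C lam j = 0 → C lam (j+1) = 0 → False := by
    intro lam j
    induction j with
    | zero => intro _ h0 _; rw [hC0] at h0; norm_num at h0
    | succ k ih =>
      intro hk h1 h2
      have hu' : u (k+1) ≠ 0 := (hu (k+1) (by omega)).ne'
      have hv' : v k ≠ 0 := (hv k (by omega)).ne'
      have heq := hC2 lam k
      rw [h2, h1] at heq
      have hck : C lam k = 0 := by
        rcases div_eq_zero_iff.mp heq.symm with h | h
        · have hvc : v k * C lam k = 0 := by linarith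
          exact (mul_eq_zero.mp hvc).resolve_left hv'
        · exact absurd h hu'
      exact ih (by omega) hck h1
  -- g λ* < 0
  set g : ℝ → ℝ := fun lam => lam * C lam (p+1) - v p * C lam p with hgdef
  have hvp : 0 < v p := hv p (by omega)
  have hgL : 0 < g L := by
    obtain ⟨h1, h2⟩ := HL p (by omega)
    have hck1 : 0 < C L (p+1) := posL (p+1) (le_refl _)
    have h4 : 4 * (u p * v p) ≤ L ^ 2 := huvL p (by omega)
    rw [hgdef]
    simp only
    nlinarith [mul_le_mul_of_nonneg_left h2 hvp.le,
      mul_le_mul_of_nonneg_right h4 hck1.le]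
  have hgstar : g lamstar < 0 := by
    obtain ⟨_, j, hj, hj0⟩ := (hmemT lamstar).1 hstarT
    have hjz : C lamstar j = 0 := le_antisymm hj0 (hnn_star j hj)
    match j with
    | 0 => rw [hC0] at hjz; norm_num at hjz
    | (m+1) =>
      by_cases hcase : m + 1 = p + 1
      · have hm : m = p := by omega
        subst hm
        have hp0 : 0 < C lamstar m := by
          rcases (hnn_star m (by omega)).lt_or_eq with h | h
          · exact h
          · exact absurd (zp lamstar m (by omega) h.symm hjz) (fun h => h)
        rw [hgdef]
        simp only
        rw [hjz]
        nlinarith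
      · have hm2 : m + 2 ≤ p + 1 := by omega
        have hle : C lamstar (m+2) ≤ 0 := by
          rw [hC2, hjz]
          apply div_nonpos_of_nonpos_of_nonneg
          · nlinarith [hnn_star m (by omega), hv m (by omega)]
          · exact (hu (m+1) (by omega)).le
        have h2' : C lamstar (m+2) = 0 := le_antisymm hle (hnn_star _ hm2)
        exact absurd (zp lamstar (m+1) hm2 hjz h2') (fun h => h)
  -- IVT
  have hgc : ContinuousOn g (Set.Icc lamstar L) := by
    apply Continuous.continuousOn
    exact (continuous_id.mul (cseq_cont u v (p+1))).sub (continuous_const.mul (cseq_cont u v p))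
  obtain ⟨lam0, hlam0mem, hlam0⟩ :=
    intermediate_value_Icc hstar_lt.le hgc ⟨hgstar.le, hgL.le⟩
  have hne : lamstar < lam0 := by
    rcases hlam0mem.1.lt_or_eq with h | h
    · exact h
    · exfalso; rw [← h] at hlam0; rw [hlam0] at hgstar; exact lt_irrefl 0 hgstar
  have hposall : ∀ k ≤ p + 1, 0 < C lam0 k := hpos_gt lam0 hne hlam0mem.2
  have hlam0pos : 0 < lam0 := lt_of_le_of_lt hstar_nonneg hne
  -- assemble
  refine ⟨fun i => C lam0 (i : ℕ), lam0, hlam0pos,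
    fun i => hposall (i : ℕ) (Nat.lt_succ_iff.mp i.isLt), ?_⟩
  funext i
  obtain ⟨m, hmlt⟩ := i
  simp only [Pi.smul_apply, smul_eq_mul, Fin.val_mk]
  have him : m ≤ p + 1 := Nat.lt_succ_iff.mp hmlt
  have key : ∀ j : ℕ, (if j = m+1 then u m else if m = j+1 then v j else 0) * C lam0 j
      = (if j = m+1 then u m * C lam0 j else 0) + (if m = j + 1 then v j * C lam0 j else 0) := by
    intro j
    rcases eq_or_ne j (m+1) with h | h
    · subst h; rw [if_pos rfl, if_pos rfl, if_neg (by omega)]; ring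
    · rw [if_neg h, if_neg h]; split_ifs <;> ring
  have hsum : (twoDiag (p+1) u v).mulVec (fun i => C lam0 (i : ℕ)) ⟨m, hmlt⟩
      = ∑ j ∈ Finset.range (p+2),
        ((if j = m+1 then u m * C lam0 j else 0) + (if m = j + 1 then v j * C lam0 j else 0)) := by
    rw [Matrix.mulVec, dotProduct]
    rw [← Fin.sum_univ_eq_sum_range (fun j =>
      (if j = m+1 then u m * C lam0 j else 0) + (if m = j + 1 then v j * C lam0 j else 0)) (p+2)]
    apply Finset.sum_congr rfl
    intro j _
    rw [← key (j : ℕ)]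
    rfl
  rw [hsum]
  rw [Finset.sum_add_distrib, Finset.sum_ite_eq' (Finset.range (p+2)) (m+1)
    (fun j => u m * C lam0 j)]
  show _ = lam0 * C lam0 m
  by_cases hm0 : m = 0
  · subst hm0
    rw [Finset.sum_eq_zero (fun j _ => by rw [if_neg (by omega)])]
    rw [if_pos (Finset.mem_range.mpr (by omega))]
    rw [hC1, hC0, mul_div_cancel₀ _ (hu 0 (by omega)).ne']
    ring
  · obtain ⟨t, ht⟩ : ∃ t, m = t + 1 := ⟨m - 1, by omega⟩
    have hcongr : ∀ j ∈ Finset.range (p+2),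
        (if m = j + 1 then v j * C lam0 j else 0) = (if j = t then v j * C lam0 j else 0) := by
      intro j _
      rcases eq_or_ne j t with h | h
      · subst h; rw [if_pos (by omega), if_pos rfl]
      · rw [if_neg (by omega), if_neg h]
    rw [Finset.sum_congr rfl hcongr,
      Finset.sum_ite_eq' (Finset.range (p+2)) t (fun j => v j * C lam0 j),
      if_pos (Finset.mem_range.mpr (show t < p + 2 by omega))]
    rcases eq_or_ne m (p+1) with hmp | hmp
    · rw [if_neg (show ¬ (m + 1 ∈ Finset.range (p+2)) from by
        rw [Finset.mem_range]; omega)]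
      have htp : t = p := by omega
      rw [htp, hmp]
      have h0 : lam0 * C lam0 (p+1) - v p * C lam0 p = 0 := hlam0
      linarith
    · rw [if_pos (Finset.mem_range.mpr (show m + 1 < p + 2 by omega))]
      rw [ht, hC2, mul_div_cancel₀ _ (hu (t+1) (by omega)).ne']
      ring
end

section
/- Let I ⊆ ℝ be a nonempty interval, n ≥ 2, let M₁,…,Mₙ be continuous two-variable means on I, and fix x < y in I. Suppose there exist semimetrics d₁,…,dₙ : [x,y] × [x,y] → ℝ₊ and positive real numbers a₂,…,aₙ and b₁,…,b_{n−1} such that for all t,s,u,v ∈ [x,y]: d₁(M₁(x,s), M₁(x,v)) ≤ b₁ d₂(s,v); dᵢ(Mᵢ(t,s), Mᵢ(u,v)) ≤ aᵢ d_{i−1}(t,u) + bᵢ d_{i+1}(s,v) for i ∈ {2,…,n−1}; and dₙ(Mₙ(t,y), Mₙ(u,y)) ≤ aₙ d_{n−1}(t,u). Assume further that w₁,…,w_{n−1} > 0, where w₋₁ := w₀ := 1 and wᵢ := w_{i−1} − a_{i+1} bᵢ w_{i−2} for i ∈ {1,…,n−1}. Then the fixed point set Φ_{(x,y)} of φ_{(x,y)}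 is a singleton. -/
namespace Stmt6Aux

/-- Extend a `Fin n`-indexed family of binary operations to `ℕ`. -/
def extFn (n : ℕ) (M : Fin n → ℝ → ℝ → ℝ) (dflt : ℝ → ℝ → ℝ) : ℕ → ℝ → ℝ → ℝ :=
  fun i => if h : i < n then M ⟨i, h⟩ else dflt

theorem extFn_eq {n : ℕ} (M : Fin n → ℝ → ℝ → ℝ) (dflt : ℝ → ℝ → ℝ) {i : ℕ} (h : i < n) :
    extFn n M dflt i = M ⟨i, h⟩ := dif_pos h

/-- The truncated fixed-point system of size `m` with boundary values `x` and `u`,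
written with `ℕ`-indexed tuples (padded by `x` from index `m` on). -/
def MeanSys (Mf : ℕ → ℝ → ℝ → ℝ) (m : ℕ) (x u : ℝ) (t : ℕ → ℝ) : Prop :=
  (∀ i < m, t i ∈ Set.Icc x u) ∧
  (∀ i j : ℕ, i ≤ j → j < m → t i ≤ t j) ∧
  (∀ i < m, t i = Mf i (if i = 0 then x else t (i - 1)) (if i = m - 1 then u else t (i + 1))) ∧
  (∀ i, m ≤ i → t i = x)

/-- Uniqueness of the solution to the truncated system, via the semimetric
contraction estimates and positivity of the `w` sequence. -/
theorem sysUniq (Mf df : ℕ → ℝ → ℝ → ℝ) (a b w : ℕ → ℝ) (n : ℕ) (x y : ℝ)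
    (dpos : ∀ i < n, ∀ p ∈ Set.Icc x y, ∀ q ∈ Set.Icc x y,
      0 ≤ df i p q ∧ (df i p q = 0 ↔ p = q))
    (lip1 : ∀ p ∈ Set.Icc x y, ∀ q ∈ Set.Icc x y,
      df 0 (Mf 0 x p) (Mf 0 x q) ≤ b 1 * df 1 p q)
    (lipmid : ∀ i : ℕ, 1 ≤ i → i ≤ n - 2 →
      ∀ t ∈ Set.Icc x y, ∀ s ∈ Set.Icc x y, ∀ p ∈ Set.Icc x y, ∀ q ∈ Set.Icc x y,
        df i (Mf i t s) (Mf i p q) ≤ a (i + 1) * df (i - 1) t p + b (i + 1) * df (i + 1) s q)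
    (hapos : ∀ i : ℕ, 2 ≤ i → i ≤ n → 0 < a i)
    (hbpos : ∀ i : ℕ, 1 ≤ i → i ≤ n - 1 → 0 < b i)
    (hw0 : w 0 = 1) (hw1 : w 1 = 1)
    (hwrec : ∀ i : ℕ, 1 ≤ i → i ≤ n - 1 → w (i + 1) = w i - a (i + 1) * b i * w (i - 1))
    (hwpos : ∀ i : ℕ, 1 ≤ i → i ≤ n - 1 → 0 < w (i + 1))
    (m : ℕ) (hm2 : 2 ≤ m) (hmn : m ≤ n) (u : ℝ) (hu : u ∈ Set.Icc x y)
    (hlast : ∀ p ∈ Set.Icc x y, ∀ q ∈ Set.Icc x y,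
      df (m - 1) (Mf (m - 1) p u) (Mf (m - 1) q u) ≤ a m * df (m - 2) p q)
    (t s : ℕ → ℝ) (ht : MeanSys Mf m x u t) (hs : MeanSys Mf m x u s) : t = s := by
  obtain ⟨htb, hto, hte, htp⟩ := ht
  obtain ⟨hsb, hso, hse, hsp⟩ := hs
  have hsub : Set.Icc x u ⊆ Set.Icc x y := Set.Icc_subset_Icc le_rfl hu.2
  have htB : ∀ i < m, t i ∈ Set.Icc x y := fun i hi => hsub (htb i hi)
  have hsB : ∀ i < m, s i ∈ Set.Icc x y := fun i hi => hsub (hsb i hi)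
  set e : ℕ → ℝ := fun i => df i (t i) (s i) with he
  have wpos : ∀ i ≤ n, 0 < w i := by
    intro i hi
    match i with
    | 0 => rw [hw0]; norm_num
    | 1 => rw [hw1]; norm_num
    | (k + 2) =>
      have := hwpos (k + 1) (by omega) (by omega)
      exact this
  have enonneg : ∀ i < m, 0 ≤ e i := fun i hi =>
    (dpos i (by omega) _ (htB i hi) _ (hsB i hi)).1
  have ezero : ∀ i < m, e i = 0 → t i = s i := fun i hi h =>
    ((dpos i (by omega) _ (htB i hi) _ (hsB i hi)).2).1 h
  -- the basic estimates
  have E0 : e 0 ≤ b 1 * e 1 := by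
    have h0 := hte 0 (by omega)
    have h1 := hse 0 (by omega)
    simp only [if_pos rfl] at h0 h1
    rw [if_neg (by omega : ¬ (0:ℕ) = m - 1)] at h0 h1
    have h2 := lip1 (t 1) (htB 1 (by omega)) (s 1) (hsB 1 (by omega))
    simp only [he]
    rw [h0, h1]
    exact h2
  have Emid : ∀ i : ℕ, 1 ≤ i → i ≤ m - 2 →
      e i ≤ a (i + 1) * e (i - 1) + b (i + 1) * e (i + 1) := by
    intro i h1 h2
    have h0 := hte i (by omega)
    have h1' := hse i (by omega)
    rw [if_neg (by omega : ¬ i = 0), if_neg (by omega : ¬ i = m - 1)] at h0 h1'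
    have h3 := lipmid i h1 (by omega) (t (i-1)) (htB _ (by omega)) (t (i+1)) (htB _ (by omega))
      (s (i-1)) (hsB _ (by omega)) (s (i+1)) (hsB _ (by omega))
    simp only [he]
    rw [h0, h1']
    exact h3
  have Elast : e (m - 1) ≤ a m * e (m - 2) := by
    have h0 := hte (m - 1) (by omega)
    have h1 := hse (m - 1) (by omega)
    rw [if_neg (by omega : ¬ m - 1 = 0), if_pos rfl] at h0 h1
    have := hlast (t (m-1-1)) (htB _ (by omega)) (s (m-1-1)) (hsB _ (by omega))
    have hmm : m - 1 - 1 = m - 2 := by omega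
    rw [hmm] at h0 h1
    simp only [he]
    rw [h0, h1]
    exact this
  -- the chain inequality
  have chain : ∀ i, i ≤ m - 2 → w (i + 1) * e i ≤ b (i + 1) * (w i * e (i + 1)) := by
    intro i
    induction i with
    | zero =>
      intro _
      rw [hw0, hw1]
      simpa using E0
    | succ i ih =>
      intro hi
      have h1 := ih (by omega)
      have h2 := Emid (i + 1) (by omega) hi
      have hi1 : i + 1 - 1 = i := by omega
      rw [hi1] at h2
      have hrec := hwrec (i + 1) (by omega) (by omega)
      rw [hi1] at hrec
      have hwp := wpos (i + 1) (by omega)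
      have hap := hapos (i + 2) (by omega) (by omega)
      rw [hrec]
      nlinarith [mul_le_mul_of_nonneg_left h2 hwp.le,
        mul_le_mul_of_nonneg_left h1 hap.le]
  -- conclude e (m-2) = 0
  have hchm := chain (m - 2) le_rfl
  have hm21 : m - 2 + 1 = m - 1 := by omega
  rw [hm21] at hchm
  have hrecm := hwrec (m - 1) (by omega) (by omega)
  have hm11 : m - 1 + 1 = m := by omega
  have hm12 : m - 1 - 1 = m - 2 := by omega
  rw [hm11, hm12] at hrecm
  have hwm := wpos m (by omega)
  have hbm := hbpos (m - 1) (by omega) (by omega)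
  have hwm2 := wpos (m - 2) (by omega)
  have ham := hapos m (by omega) (by omega)
  have em2 : e (m - 2) = 0 := by
    have h1 : 0 ≤ e (m - 2) := enonneg _ (by omega)
    have h2 : w m * e (m - 2) ≤ 0 := by
      nlinarith [mul_le_mul_of_nonneg_left Elast (mul_pos hbm hwm2).le]
    nlinarith
  have em1 : e (m - 1) = 0 := by
    have h1 : 0 ≤ e (m - 1) := enonneg _ (by omega)
    nlinarith [Elast]
  have zero_all : ∀ j k : ℕ, k + j = m - 2 → e k = 0 := by
    intro j
    induction j with
    | zero =>
      intro k hk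
      have : k = m - 2 := by omega
      rw [this]; exact em2
    | succ j ih =>
      intro k hk
      have h1 : e (k + 1) = 0 := ih (k + 1) (by omega)
      have h2 := chain k (by omega)
      rw [h1] at h2
      have h3 : 0 ≤ e k := enonneg _ (by omega)
      have h4 := wpos (k + 1) (by omega)
      nlinarith
  funext i
  rcases lt_or_ge i m with hi | hi
  · rcases Nat.lt_or_ge i (m - 1) with hi' | hi'
    · exact ezero i hi (zero_all (m - 2 - i) i (by omega))
    · have : i = m - 1 := by omega
      rw [this]
      exact ezero _ (by omega) em1
  · rw [htp i hi, hsp i hi]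


/-- Existence step: from unique solvability at size `m` for all boundaries in `[x,v]`,
existence at size `m+1` with boundary `v`. -/
theorem sysStep (Mf : ℕ → ℝ → ℝ → ℝ) (n : ℕ) (x y : ℝ) (hxy : x ≤ y)
    (mean : ∀ i < n, ∀ p ∈ Set.Icc x y, ∀ q ∈ Set.Icc x y,
      p ≤ q → p ≤ Mf i p q ∧ Mf i p q ≤ q)
    (cont : ∀ i < n, ContinuousOn (fun pr : ℝ × ℝ => Mf i pr.1 pr.2)
      {pr : ℝ × ℝ | pr.1 ∈ Set.Icc x y ∧ pr.2 ∈ Set.Icc x y ∧ pr.1 ≤ pr.2})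
    (m : ℕ) (hm : 1 ≤ m) (hmn : m + 1 ≤ n) (v : ℝ) (hv : v ∈ Set.Icc x y)
    (IH : ∀ u ∈ Set.Icc x v, ∃ t, MeanSys Mf m x u t ∧ ∀ s, MeanSys Mf m x u s → s = t) :
    ∃ t, MeanSys Mf (m + 1) x v t := by
  have hxv : x ≤ v := hv.1
  have hsubv : Set.Icc x v ⊆ Set.Icc x y := Set.Icc_subset_Icc le_rfl hv.2
  have cfst : Continuous (fun p : ℝ × (ℕ → ℝ) => p.1) := continuous_fst
  have capp : ∀ i : ℕ, Continuous (fun p : ℝ × (ℕ → ℝ) => p.2 i) :=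
    fun i => (continuous_apply i).comp continuous_snd
  set B : Set (ℝ × (ℕ → ℝ)) := {p | p.1 ∈ Set.Icc x v ∧ (∀ i < m, p.2 i ∈ Set.Icc x p.1) ∧
    (∀ i j : ℕ, i ≤ j → j < m → p.2 i ≤ p.2 j) ∧ (∀ i, m ≤ i → p.2 i = x)} with hBdef
  have hBclosed : IsClosed B := by
    have e1 : IsClosed {p : ℝ × (ℕ → ℝ) | p.1 ∈ Set.Icc x v} :=
      IsClosed.preimage cfst isClosed_Icc
    have e2 : ∀ i : ℕ, IsClosed {p : ℝ × (ℕ → ℝ) | x ≤ p.2 i} :=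
      fun i => isClosed_le continuous_const (capp i)
    have e3 : ∀ i : ℕ, IsClosed {p : ℝ × (ℕ → ℝ) | p.2 i ≤ p.1} :=
      fun i => isClosed_le (capp i) cfst
    have e4 : ∀ i j : ℕ, IsClosed {p : ℝ × (ℕ → ℝ) | p.2 i ≤ p.2 j} :=
      fun i j => isClosed_le (capp i) (capp j)
    have e5 : ∀ i : ℕ, IsClosed {p : ℝ × (ℕ → ℝ) | p.2 i = x} :=
      fun i => isClosed_eq (capp i) continuous_const
    have hBeq : B = {p : ℝ × (ℕ → ℝ) | p.1 ∈ Set.Icc x v} ∩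
        ((⋂ i, ⋂ (_ : i < m), ({p : ℝ × (ℕ → ℝ) | x ≤ p.2 i} ∩ {p | p.2 i ≤ p.1})) ∩
         ((⋂ i, ⋂ j, ⋂ (_ : i ≤ j), ⋂ (_ : j < m), {p : ℝ × (ℕ → ℝ) | p.2 i ≤ p.2 j}) ∩
          (⋂ i, ⋂ (_ : m ≤ i), {p : ℝ × (ℕ → ℝ) | p.2 i = x}))) := by
      ext p
      simp only [hBdef, Set.mem_setOf_eq, Set.mem_inter_iff, Set.mem_iInter, Set.mem_Icc]
      all_goals tauto
    rw [hBeq]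
    exact e1.inter (((isClosed_iInter fun i => isClosed_iInter fun _ =>
      (e2 i).inter (e3 i))).inter
      (((isClosed_iInter fun i => isClosed_iInter fun j => isClosed_iInter fun _ =>
        isClosed_iInter fun _ => e4 i j)).inter
       (isClosed_iInter fun i => isClosed_iInter fun _ => e5 i)))
  have hBsub : B ⊆ (Set.Icc x v) ×ˢ (Set.univ.pi fun _ : ℕ => Set.Icc x v) := by
    rintro ⟨u, t⟩ ⟨h1, h2, _h3, h4⟩
    refine ⟨h1, fun i _ => ?_⟩
    rcases lt_or_ge i m with hi | hi
    · exact ⟨(h2 i hi).1, le_trans (h2 i hi).2 h1.2⟩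
    · rw [h4 i hi]; exact ⟨le_rfl, hxv⟩
  have hKbig : IsCompact ((Set.Icc x v) ×ˢ (Set.univ.pi fun _ : ℕ => Set.Icc x v)) :=
    (isCompact_Icc).prod (isCompact_univ_pi fun _ => isCompact_Icc)
  -- continuity helper
  have hcont_comp : ∀ (g h : ℝ × (ℕ → ℝ) → ℝ) (i : ℕ), i < n → Continuous g → Continuous h →
      (∀ p ∈ B, g p ∈ Set.Icc x y) → (∀ p ∈ B, h p ∈ Set.Icc x y) → (∀ p ∈ B, g p ≤ h p) →
      ContinuousOn (fun p => Mf i (g p) (h p)) B := by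
    intro g h i hi hg hh hg1 hh1 hgh
    have hrw : (fun p => Mf i (g p) (h p)) =
        (fun pr : ℝ × ℝ => Mf i pr.1 pr.2) ∘ (fun p => (g p, h p)) := rfl
    rw [hrw]
    exact (cont i hi).comp ((hg.prodMk hh).continuousOn)
      (fun p hp => ⟨hg1 p hp, hh1 p hp, hgh p hp⟩)
  set E : ℕ → Set (ℝ × (ℕ → ℝ)) := fun i => {p : ℝ × (ℕ → ℝ) |
      p.2 i = Mf i (if i = 0 then x else p.2 (i - 1)) (if i = m - 1 then p.1 else p.2 (i + 1))}
    with hEdef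
  have hEclosed : ∀ i < m, IsClosed (B ∩ E i) := by
    intro i hi
    have hg : Continuous (fun p : ℝ × (ℕ → ℝ) => if i = 0 then x else p.2 (i - 1)) := by
      by_cases hc : i = 0
      · simp only [if_pos hc]; exact continuous_const
      · simp only [if_neg hc]; exact capp _
    have hh : Continuous (fun p : ℝ × (ℕ → ℝ) => if i = m - 1 then p.1 else p.2 (i + 1)) := by
      by_cases hc : i = m - 1
      · simp only [if_pos hc]; exact cfst
      · simp only [if_neg hc]; exact capp _
    have hcg : ContinuousOn (fun p : ℝ × (ℕ → ℝ) =>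
        Mf i (if i = 0 then x else p.2 (i - 1)) (if i = m - 1 then p.1 else p.2 (i + 1))) B := by
      refine hcont_comp _ _ i (by omega) hg hh ?_ ?_ ?_
      · rintro ⟨u, t⟩ ⟨h1, h2, h3, _h4⟩
        rcases eq_or_ne i 0 with hc | hc
        · rw [if_pos hc]; exact Set.mem_Icc.mpr ⟨le_rfl, hxy⟩
        · rw [if_neg hc]
          have := h2 (i - 1) (by omega)
          exact Set.mem_Icc.mpr ⟨this.1, le_trans this.2 (le_trans h1.2 hv.2)⟩
      · rintro ⟨u, t⟩ ⟨h1, h2, h3, _h4⟩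
        rcases eq_or_ne i (m - 1) with hc | hc
        · rw [if_pos hc]; exact Set.mem_Icc.mpr ⟨h1.1, le_trans h1.2 hv.2⟩
        · rw [if_neg hc]
          have := h2 (i + 1) (by omega)
          exact Set.mem_Icc.mpr ⟨this.1, le_trans this.2 (le_trans h1.2 hv.2)⟩
      · rintro ⟨u, t⟩ ⟨h1, h2, h3, _h4⟩
        dsimp only
        rcases eq_or_ne i 0 with hc0 | hc0 <;> rcases eq_or_ne i (m - 1) with hc1 | hc1
        · rw [if_pos hc0, if_pos hc1]; exact h1.1
        · rw [if_pos hc0, if_neg hc1]; exact (h2 _ (by omega)).1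
        · rw [if_neg hc0, if_pos hc1]; exact (h2 _ (by omega)).2
        · rw [if_neg hc0, if_neg hc1]; exact h3 _ _ (by omega) (by omega)
    have hErw : B ∩ E i = B ∩ (fun p : ℝ × (ℕ → ℝ) => p.2 i -
        Mf i (if i = 0 then x else p.2 (i - 1)) (if i = m - 1 then p.1 else p.2 (i + 1))) ⁻¹' {0} := by
      ext p
      simp [hEdef, sub_eq_zero]
    rw [hErw]
    exact ContinuousOn.preimage_isClosed_of_isClosed
      (((capp i).continuousOn).sub hcg) hBclosed isClosed_singleton
  -- the solution set S
  set S : Set (ℝ × (ℕ → ℝ)) := {p | p.1 ∈ Set.Icc x v ∧ MeanSys Mf m x p.1 p.2} with hSdef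
  have hSB : S = B ∩ ⋂ i, ⋂ (_ : i < m), (B ∩ E i) := by
    ext p
    simp only [hSdef, hBdef, hEdef, Set.mem_setOf_eq, Set.mem_inter_iff, Set.mem_iInter,
      MeanSys]
    constructor
    · rintro ⟨h1, h2, h3, h4, h5⟩
      exact ⟨⟨h1, h2, h3, h5⟩, fun i hi => ⟨⟨h1, h2, h3, h5⟩, h4 i hi⟩⟩
    · rintro ⟨⟨h1, h2, h3, h5⟩, h6⟩
      exact ⟨h1, h2, h3, fun i hi => (h6 i hi).2, h5⟩
  have hSclosed : IsClosed S := by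
    rw [hSB]
    exact hBclosed.inter (isClosed_iInter fun i => isClosed_iInter fun hi => hEclosed i hi)
  have hSsubB : S ⊆ B := by rw [hSB]; exact Set.inter_subset_left
  have hScompact : IsCompact S :=
    hKbig.of_isClosed_subset hSclosed (fun p hp => hBsub (hSsubB hp))
  -- the last-coordinate map
  have hglast : ContinuousOn (fun p : ℝ × (ℕ → ℝ) => Mf m (p.2 (m - 1)) v) B := by
    refine hcont_comp _ _ m (by omega) (capp _) continuous_const ?_ ?_ ?_
    · rintro ⟨u, t⟩ ⟨h1, h2, _h3, _h4⟩
      have := h2 (m - 1) (by omega)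
      exact Set.mem_Icc.mpr ⟨this.1, le_trans this.2 (le_trans h1.2 hv.2)⟩
    · intro p _; exact hv
    · rintro ⟨u, t⟩ ⟨h1, h2, _h3, _h4⟩
      exact le_trans (h2 (m - 1) (by omega)).2 h1.2
  set KA : Set (ℝ × (ℕ → ℝ)) := S ∩ {p | p.1 ≤ Mf m (p.2 (m - 1)) v} with hKAdef
  set KB : Set (ℝ × (ℕ → ℝ)) := S ∩ {p | Mf m (p.2 (m - 1)) v ≤ p.1} with hKBdef
  have hKAclosed : IsClosed KA := by
    have h1 : KA = S ∩ (fun p : ℝ × (ℕ → ℝ) =>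
        Mf m (p.2 (m - 1)) v - p.1) ⁻¹' (Set.Ici 0) := by
      ext p
      simp [hKAdef, sub_nonneg]
    rw [h1]
    exact ContinuousOn.preimage_isClosed_of_isClosed
      ((hglast.mono hSsubB).sub (cfst.continuousOn)) hSclosed isClosed_Ici
  have hKBclosed : IsClosed KB := by
    have h1 : KB = S ∩ (fun p : ℝ × (ℕ → ℝ) =>
        p.1 - Mf m (p.2 (m - 1)) v) ⁻¹' (Set.Ici 0) := by
      ext p
      simp [hKBdef, sub_nonneg]
    rw [h1]
    exact ContinuousOn.preimage_isClosed_of_isClosed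
      ((cfst.continuousOn).sub (hglast.mono hSsubB)) hSclosed isClosed_Ici
  have hKAcompact : IsCompact KA :=
    hScompact.of_isClosed_subset hKAclosed Set.inter_subset_left
  have hKBcompact : IsCompact KB :=
    hScompact.of_isClosed_subset hKBclosed Set.inter_subset_left
  set Aset : Set ℝ := Prod.fst '' KA with hAdef
  set Bset : Set ℝ := Prod.fst '' KB with hBsetdef
  have hAclosed : IsClosed Aset := (hKAcompact.image continuous_fst).isClosed
  have hBsetclosed : IsClosed Bset := (hKBcompact.image continuous_fst).isClosed
  have hcover : Set.Icc x v ⊆ Aset ∪ Bset := by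
    intro u hu
    obtain ⟨t, ht, -⟩ := IH u hu
    rcases le_total u (Mf m (t (m - 1)) v) with h | h
    · exact Or.inl ⟨(u, t), ⟨⟨hu, ht⟩, h⟩, rfl⟩
    · exact Or.inr ⟨(u, t), ⟨⟨hu, ht⟩, h⟩, rfl⟩
  have hxA : x ∈ Set.Icc x v ∩ Aset := by
    obtain ⟨t, ht, -⟩ := IH x (Set.mem_Icc.mpr ⟨le_rfl, hxv⟩)
    have htm : t (m - 1) = x := by
      have h1 := ht.1 (m - 1) (by omega)
      exact le_antisymm h1.2 h1.1
    have h2 : x ≤ Mf m (t (m - 1)) v := by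
      rw [htm]
      exact (mean m (by omega) x (Set.mem_Icc.mpr ⟨le_rfl, hxy⟩) v hv hxv).1
    exact ⟨Set.mem_Icc.mpr ⟨le_rfl, hxv⟩,
      ⟨(x, t), ⟨⟨Set.mem_Icc.mpr ⟨le_rfl, hxv⟩, ht⟩, h2⟩, rfl⟩⟩
  have hvB : v ∈ Set.Icc x v ∩ Bset := by
    obtain ⟨t, ht, -⟩ := IH v (Set.mem_Icc.mpr ⟨hxv, le_rfl⟩)
    have htm := ht.1 (m - 1) (by omega)
    have h2 : Mf m (t (m - 1)) v ≤ v :=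
      (mean m (by omega) (t (m - 1)) (hsubv htm) v hv htm.2).2
    exact ⟨Set.mem_Icc.mpr ⟨hxv, le_rfl⟩,
      ⟨(v, t), ⟨⟨Set.mem_Icc.mpr ⟨hxv, le_rfl⟩, ht⟩, h2⟩, rfl⟩⟩
  obtain ⟨u, huIcc, huA, huB⟩ :=
    (isPreconnected_closed_iff.mp isPreconnected_Icc) Aset Bset hAclosed hBsetclosed
      hcover ⟨x, hxA⟩ ⟨v, hvB⟩
  obtain ⟨pA, hpA, hpA1⟩ := huA
  obtain ⟨pB, hpB, hpB1⟩ := huB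
  obtain ⟨t0, ht0, huniq⟩ := IH u huIcc
  have hA2 : MeanSys Mf m x u pA.2 := by
    have := hpA.1.2
    rwa [hpA1] at this
  have hB2 : MeanSys Mf m x u pB.2 := by
    have := hpB.1.2
    rwa [hpB1] at this
  have hA3 : pA.2 = t0 := huniq _ hA2
  have hB3 : pB.2 = t0 := huniq _ hB2
  have hle1 : u ≤ Mf m (t0 (m - 1)) v := by
    have := hpA.2
    simp only [Set.mem_setOf_eq] at this
    rw [hA3, hpA1] at this
    exact this
  have hle2 : Mf m (t0 (m - 1)) v ≤ u := by
    have := hpB.2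
    simp only [Set.mem_setOf_eq] at this
    rw [hB3, hpB1] at this
    exact this
  have heq : Mf m (t0 (m - 1)) v = u := le_antisymm hle2 hle1
  -- build the new solution
  obtain ⟨ht0b, ht0o, ht0e, ht0p⟩ := ht0
  refine ⟨fun i => if i = m then u else t0 i, ?_, ?_, ?_, ?_⟩
  · intro i hi
    dsimp only
    rcases eq_or_ne i m with hc | hc
    · rw [if_pos hc]; exact huIcc
    · rw [if_neg hc]
      have := ht0b i (by omega)
      exact Set.mem_Icc.mpr ⟨this.1, le_trans this.2 huIcc.2⟩
  · intro i j hij hj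
    dsimp only
    rcases eq_or_ne j m with hc | hc
    · rcases eq_or_ne i m with hc0 | hc0
      · rw [if_pos hc0, if_pos hc]
      · rw [if_neg hc0, if_pos hc]
        exact (ht0b i (by omega)).2
    · have hcm : i ≠ m := by omega
      rw [if_neg hcm, if_neg hc]
      exact ht0o i j hij (by omega)
  · intro i hi
    dsimp only
    rcases eq_or_ne i m with hc | hc
    · subst hc
      rw [if_pos rfl, if_neg (by omega : ¬ i = 0), if_neg (by omega : ¬ i - 1 = i),
        if_pos (by omega : i = i + 1 - 1)]
      exact heq.symm
    · have him : i < m := by omega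
      rw [if_neg hc]
      have h := ht0e i him
      have h2 : (if i = 0 then x else (if i - 1 = m then u else t0 (i - 1)))
          = (if i = 0 then x else t0 (i - 1)) := by
        rcases eq_or_ne i 0 with hc0 | hc0
        · rw [if_pos hc0, if_pos hc0]
        · rw [if_neg hc0, if_neg hc0, if_neg (by omega : ¬ i - 1 = m)]
      rw [if_neg (by omega : ¬ i = m + 1 - 1)]
      rw [h2]
      rcases eq_or_ne i (m - 1) with hc1 | hc1
      · rw [if_pos (by omega : i + 1 = m)]
        rw [if_pos hc1] at h
        exact h
      · rw [if_neg (by omega : ¬ i + 1 = m)]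
        rw [if_neg hc1] at h
        exact h
  · intro i hi
    dsimp only
    rw [if_neg (by omega : ¬ i = m)]
    exact ht0p i (by omega)


/-- Base case: the size-1 system has a unique solution. -/
theorem sysBase (Mf : ℕ → ℝ → ℝ → ℝ) (n : ℕ) (x y : ℝ) (hn : 1 ≤ n)
    (mean : ∀ i < n, ∀ p ∈ Set.Icc x y, ∀ q ∈ Set.Icc x y,
      p ≤ q → p ≤ Mf i p q ∧ Mf i p q ≤ q)
    (u : ℝ) (hu : u ∈ Set.Icc x y) :
    ∃ t, MeanSys Mf 1 x u t ∧ ∀ s, MeanSys Mf 1 x u s → s = t := by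
  have hxy : x ≤ y := le_trans hu.1 hu.2
  have hxu : x ≤ u := hu.1
  have hmem : Mf 0 x u ∈ Set.Icc x u := by
    have := mean 0 (by omega) x (Set.mem_Icc.mpr ⟨le_rfl, hxy⟩) u hu hxu
    exact Set.mem_Icc.mpr this
  refine ⟨fun i => if i = 0 then Mf 0 x u else x, ⟨?_, ?_, ?_, ?_⟩, ?_⟩
  · intro i hi
    have : i = 0 := by omega
    subst this
    simpa using hmem
  · intro i j hij hj
    have : i = 0 ∧ j = 0 := by omega
    rcases this with ⟨h1, h2⟩
    subst h1; subst h2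
    exact le_rfl
  · intro i hi
    have : i = 0 := by omega
    subst this
    simp
  · intro i hi
    have : ¬ i = 0 := by omega
    simp [this]
  · intro s hs
    obtain ⟨hsb, hso, hse, hsp⟩ := hs
    funext i
    rcases eq_or_ne i 0 with hc | hc
    · subst hc
      have := hse 0 (by omega)
      simpa using this
    · rw [if_neg hc]
      exact hsp i (by omega)

end Stmt6Aux




/-- `M` is a two-variable mean on `I` (its values on pairs `x > y` are irrelevant). -/
def IsMeanOn (I : Set ℝ) (M : ℝ → ℝ → ℝ) : Prop :=
  ∀ x ∈ I, ∀ y ∈ I, x ≤ y → x ≤ M x y ∧ M x y ≤ y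

/-- `M` is a strict two-variable mean on `I`. -/
def IsStrictMeanOn (I : Set ℝ) (M : ℝ → ℝ → ℝ) : Prop :=
  IsMeanOn I M ∧ ∀ x ∈ I, ∀ y ∈ I, x < y → x < M x y ∧ M x y < y

/-- The map `φ_{(x,y)}(t₁,…,tₙ) = (M₁(x,t₂), M₂(t₁,t₃), …, Mₙ(t_{n-1},y))`
(0-indexed: `M i` is the paper's `M_{i+1}`). -/
def phiMap (n : ℕ) (M : Fin n → ℝ → ℝ → ℝ) (x y : ℝ) (t : Fin n → ℝ) : Fin n → ℝ :=
  fun i =>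
    M i (if _h : (i : ℕ) = 0 then x else t ⟨(i : ℕ) - 1, by have := i.isLt; omega⟩)
        (if _h : (i : ℕ) = n - 1 then y else t ⟨(i : ℕ) + 1, by have := i.isLt; omega⟩)

/-- The fixed point set `Φ_{(x,y)} = {ξ ∈ [x,y]ⁿ_≤ : φ_{(x,y)}(ξ) = ξ}`. -/
def phiFixedSet (n : ℕ) (M : Fin n → ℝ → ℝ → ℝ) (x y : ℝ) : Set (Fin n → ℝ) :=
  {t | (∀ i, t i ∈ Set.Icc x y) ∧ Monotone t ∧ phiMap n M x y t = t}

/-- If the means admit the contraction-type estimates with respect to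
semimetrics `d₁,…,dₙ` on `[x,y]` with constants `a₂,…,aₙ, b₁,…,b_{n-1}` whose associated
sequence `w` is positive, then `Φ_{(x,y)}` is a singleton.  (Indexing: `M i`, `d i` with
`i : Fin n` are the paper's `M_{i+1}`, `d_{i+1}`; `a`, `b`, `w` are indexed as in the
paper except that `w k` here denotes the paper's `w_{k-1}`, so `w 0 = w 1 = 1`.) -/
theorem stmt6 (I : Set ℝ) (hI : Set.OrdConnected I) (hne : I.Nonempty)
    (n : ℕ) (hn : 2 ≤ n) (M : Fin n → ℝ → ℝ → ℝ)
    (hMmean : ∀ i, IsMeanOn I (M i))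
    (hMcont : ∀ i, ContinuousOn (fun p : ℝ × ℝ => M i p.1 p.2)
      {p : ℝ × ℝ | p.1 ∈ I ∧ p.2 ∈ I ∧ p.1 ≤ p.2})
    (x y : ℝ) (hx : x ∈ I) (hy : y ∈ I) (hxy : x < y)
    (d : Fin n → ℝ → ℝ → ℝ)
    (hdpos : ∀ i, ∀ s ∈ Set.Icc x y, ∀ t ∈ Set.Icc x y,
      0 ≤ d i s t ∧ (d i s t = 0 ↔ s = t))
    (hdsymm : ∀ i, ∀ s ∈ Set.Icc x y, ∀ t ∈ Set.Icc x y, d i s t = d i t s)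
    (a b : ℕ → ℝ)
    (hapos : ∀ i : ℕ, 2 ≤ i → i ≤ n → 0 < a i)
    (hbpos : ∀ i : ℕ, 1 ≤ i → i ≤ n - 1 → 0 < b i)
    (hlip1 : ∀ s ∈ Set.Icc x y, ∀ v ∈ Set.Icc x y,
      d ⟨0, by omega⟩ (M ⟨0, by omega⟩ x s) (M ⟨0, by omega⟩ x v) ≤
        b 1 * d ⟨1, by omega⟩ s v)
    (hlipmid : ∀ i : ℕ, ∀ _h1 : 1 ≤ i, ∀ _h2 : i ≤ n - 2,
      ∀ t ∈ Set.Icc x y, ∀ s ∈ Set.Icc x y, ∀ u ∈ Set.Icc x y, ∀ v ∈ Set.Icc x y,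
        d ⟨i, by omega⟩ (M ⟨i, by omega⟩ t s) (M ⟨i, by omega⟩ u v) ≤
          a (i + 1) * d ⟨i - 1, by omega⟩ t u + b (i + 1) * d ⟨i + 1, by omega⟩ s v)
    (hlipn : ∀ t ∈ Set.Icc x y, ∀ u ∈ Set.Icc x y,
      d ⟨n - 1, by omega⟩ (M ⟨n - 1, by omega⟩ t y) (M ⟨n - 1, by omega⟩ u y) ≤
        a n * d ⟨n - 2, by omega⟩ t u)
    (w : ℕ → ℝ) (hw0 : w 0 = 1) (hw1 : w 1 = 1)
    (hwrec : ∀ i : ℕ, 1 ≤ i → i ≤ n - 1 → w (i + 1) = w i - a (i + 1) * b i * w (i - 1))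
    (hwpos : ∀ i : ℕ, 1 ≤ i → i ≤ n - 1 → 0 < w (i + 1)) :
    ∃ ξ, phiFixedSet n M x y = {ξ} := by
  classical
  have hsub : Set.Icc x y ⊆ I := hI.out hx hy
  have hxyle : x ≤ y := hxy.le
  set Mf : ℕ → ℝ → ℝ → ℝ := Stmt6Aux.extFn n M (fun p _ => p) with hMfdef
  set df : ℕ → ℝ → ℝ → ℝ := Stmt6Aux.extFn n d (fun _ _ => 0) with hdfdef
  have hMfeq : ∀ (i : ℕ) (h : i < n), Mf i = M ⟨i, h⟩ :=
    fun i h => Stmt6Aux.extFn_eq M _ h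
  have hdfeq : ∀ (i : ℕ) (h : i < n), df i = d ⟨i, h⟩ :=
    fun i h => Stmt6Aux.extFn_eq d _ h
  have mean' : ∀ i < n, ∀ p ∈ Set.Icc x y, ∀ q ∈ Set.Icc x y,
      p ≤ q → p ≤ Mf i p q ∧ Mf i p q ≤ q := by
    intro i hi p hp q hq hpq
    rw [hMfeq i hi]
    exact hMmean ⟨i, hi⟩ p (hsub hp) q (hsub hq) hpq
  have cont' : ∀ i < n, ContinuousOn (fun pr : ℝ × ℝ => Mf i pr.1 pr.2)
      {pr : ℝ × ℝ | pr.1 ∈ Set.Icc x y ∧ pr.2 ∈ Set.Icc x y ∧ pr.1 ≤ pr.2} := by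
    intro i hi
    rw [hMfeq i hi]
    exact (hMcont ⟨i, hi⟩).mono (fun pr hpr => ⟨hsub hpr.1, hsub hpr.2.1, hpr.2.2⟩)
  have dpos' : ∀ i < n, ∀ p ∈ Set.Icc x y, ∀ q ∈ Set.Icc x y,
      0 ≤ df i p q ∧ (df i p q = 0 ↔ p = q) := by
    intro i hi p hp q hq
    rw [hdfeq i hi]
    exact hdpos ⟨i, hi⟩ p hp q hq
  have lip1' : ∀ p ∈ Set.Icc x y, ∀ q ∈ Set.Icc x y,
      df 0 (Mf 0 x p) (Mf 0 x q) ≤ b 1 * df 1 p q := by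
    intro p hp q hq
    rw [hdfeq 0 (by omega), hdfeq 1 (by omega), hMfeq 0 (by omega)]
    exact hlip1 p hp q hq
  have lipmid' : ∀ i : ℕ, 1 ≤ i → i ≤ n - 2 →
      ∀ t ∈ Set.Icc x y, ∀ s ∈ Set.Icc x y, ∀ p ∈ Set.Icc x y, ∀ q ∈ Set.Icc x y,
        df i (Mf i t s) (Mf i p q) ≤ a (i + 1) * df (i - 1) t p + b (i + 1) * df (i + 1) s q := by
    intro i h1 h2 t ht s hs p hp q hq
    rw [hdfeq i (by omega), hdfeq (i - 1) (by omega), hdfeq (i + 1) (by omega),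
      hMfeq i (by omega)]
    exact hlipmid i h1 h2 t ht s hs p hp q hq
  have lipn' : ∀ p ∈ Set.Icc x y, ∀ q ∈ Set.Icc x y,
      df (n - 1) (Mf (n - 1) p y) (Mf (n - 1) q y) ≤ a n * df (n - 2) p q := by
    intro p hp q hq
    rw [hdfeq (n - 1) (by omega), hdfeq (n - 2) (by omega), hMfeq (n - 1) (by omega)]
    exact hlipn p hp q hq
  -- unique solvability of the truncated systems
  have key : ∀ m : ℕ, 1 ≤ m → m + 1 ≤ n → ∀ u ∈ Set.Icc x y,
      ∃ t, Stmt6Aux.MeanSys Mf m x u t ∧ ∀ s, Stmt6Aux.MeanSys Mf m x u s → s = t := by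
    intro m hm
    induction m, hm using Nat.le_induction with
    | base =>
      intro _ u hu
      exact Stmt6Aux.sysBase Mf n x y (by omega) mean' u hu
    | succ m hm ih =>
      intro hsn u hu
      have hex : ∃ t, Stmt6Aux.MeanSys Mf (m + 1) x u t := by
        refine Stmt6Aux.sysStep Mf n x y hxyle mean' cont' m hm (by omega) u hu ?_
        intro u' hu'
        exact ih (by omega) u' (Set.mem_Icc.mpr ⟨hu'.1, le_trans hu'.2 hu.2⟩)
      obtain ⟨t, ht⟩ := hex
      refine ⟨t, ht, fun s hs => ?_⟩
      refine Stmt6Aux.sysUniq Mf df a b w n x y dpos' lip1' lipmid' hapos hbpos hw0 hw1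
        hwrec hwpos (m + 1) (by omega) (by omega) u hu ?_ s t hs ht
      intro p hp q hq
      have h := lipmid' m hm (by omega) p hp u hu q hq u hu
      have hz : df (m + 1) u u = 0 := (dpos' (m + 1) (by omega) u hu u hu).2.mpr rfl
      rw [hz] at h
      have e1 : m + 1 - 1 = m := by omega
      have e2 : m + 1 - 2 = m - 1 := by omega
      rw [e1, e2]
      linarith
  -- the full system of size n
  have hyIcc : y ∈ Set.Icc x y := Set.mem_Icc.mpr ⟨hxyle, le_rfl⟩
  have hexn : ∃ t, Stmt6Aux.MeanSys Mf (n - 1 + 1) x y t := by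
    refine Stmt6Aux.sysStep Mf n x y hxyle mean' cont' (n - 1) (by omega) (by omega) y hyIcc ?_
    intro u hu
    exact key (n - 1) (by omega) (by omega) u (Set.mem_Icc.mpr ⟨hu.1, le_trans hu.2 le_rfl⟩)
  have en : n - 1 + 1 = n := by omega
  rw [en] at hexn
  obtain ⟨T, hT⟩ := hexn
  have huniqN : ∀ s, Stmt6Aux.MeanSys Mf n x y s → s = T := by
    intro s hs
    exact Stmt6Aux.sysUniq Mf df a b w n x y dpos' lip1' lipmid' hapos hbpos hw0 hw1
      hwrec hwpos n (by omega) le_rfl y hyIcc lipn' s T hs hT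
  -- conversion to the `Fin n` statement
  obtain ⟨hTb, hTo, hTe, hTp⟩ := hT
  refine ⟨fun i : Fin n => T (i : ℕ), Set.eq_singleton_iff_unique_mem.mpr ⟨⟨?_, ?_, ?_⟩, ?_⟩⟩
  · intro i
    exact hTb i i.isLt
  · intro i j hij
    exact hTo i j hij j.isLt
  · funext i
    have h := hTe (i : ℕ) i.isLt
    rw [hMfeq _ i.isLt, Fin.eta] at h
    simp only [phiMap, dite_eq_ite]
    exact h.symm
  · intro s hs
    obtain ⟨hsb, hsmono, hseq⟩ := hs
    set s' : ℕ → ℝ := fun i => if h : i < n then s ⟨i, h⟩ else x with hs'def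
    have hs'sys : Stmt6Aux.MeanSys Mf n x y s' := by
      refine ⟨?_, ?_, ?_, ?_⟩
      · intro i hi
        simp only [hs'def]
        rw [dif_pos hi]
        exact hsb ⟨i, hi⟩
      · intro i j hij hj
        simp only [hs'def]
        rw [dif_pos (by omega : i < n), dif_pos hj]
        exact hsmono (show (⟨i, by omega⟩ : Fin n) ≤ ⟨j, hj⟩ from hij)
      · intro i hi
        have hcf := congrFun hseq ⟨i, hi⟩
        simp only [phiMap, dite_eq_ite] at hcf
        simp only [hs'def]
        rw [dif_pos hi, hMfeq i hi]
        rw [← hcf]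
        congr 1
        · rcases eq_or_ne i 0 with hc | hc
          · rw [if_pos hc, if_pos hc]
          · rw [if_neg hc, if_neg hc]
            have h' : i - 1 < n := by omega
            exact (dif_pos h' :
              (if h : i - 1 < n then s ⟨i - 1, h⟩ else x) = s ⟨i - 1, h'⟩).symm
        · rcases eq_or_ne i (n - 1) with hc | hc
          · rw [if_pos hc, dif_pos hc]
          · rw [if_neg hc, dif_neg hc]
            have h' : i + 1 < n := by omega
            exact (dif_pos h' :
              (if h : i + 1 < n then s ⟨i + 1, h⟩ else x) = s ⟨i + 1, h'⟩).symm
      · intro i hi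
        simp only [hs'def]
        rw [dif_neg (by omega : ¬ i < n)]
    have hfin : s' = T := huniqN s' hs'sys
    funext i
    have h1 := congrFun hfin (i : ℕ)
    simp only [hs'def] at h1
    rw [dif_pos i.isLt, Fin.eta] at h1
    exact h1
end

section
/- Let I ⊆ ℝ be a nonempty interval, n ≥ 2, and let f₁,…,fₙ, g₁,…,gₙ : I → ℝ be continuous strictly increasing functions. For x < y in I, let φ_{(x,y)}(t₁,…,tₙ) := (M_{f₁,g₁}(x,t₂), M_{f₂,g₂}(t₁,t₃), …, M_{fₙ,gₙ}(t_{n−1},y)) on [x,y]ⁿ_≤, with Matkowski means M_{fᵢ,gᵢ}. Then for every x < y in I the fixed point set Φ_{(x,y)} is nonempty and compact. Furthermore, Φ_{(x,y)} is a singleton provided that aᵢ := lip[fᵢ ∘ (f_{i−1}+g_{i−1})⁻¹] < +∞ for i ∈ {2,…,n}, bᵢ := lip[gᵢ ∘ (f_{i+1}+g_{i+1})⁻¹] < +∞ for i ∈ {1,…,n−1}, and w₁,…,w_{n−1} > 0, where w₋₁ := w₀ := 1 and wᵢ := w_{i−1} − a_{i+1} bᵢ w_{i−2} for i ∈ {1,…,n−1}.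 -/
open Set

theorem eq_zero_of_le_mul_pred_add_mul_succ {n : ℕ} {a b c w : ℕ → ℝ} (hc : ∀ k, 0 ≤ c k)
    (hc0 : c 0 = 0) (hcn : c (n + 1) = 0) (ha : ∀ k, 2 ≤ k → k ≤ n → 0 ≤ a k)
    (hw0 : w 0 = 1) (hw1 : w 1 = 1)
    (hwrec : ∀ k, 1 ≤ k → k ≤ n - 1 → w (k + 1) = w k - a (k + 1) * b k * w (k - 1))
    (hwpos : ∀ k, 1 ≤ k → k ≤ n - 1 → 0 < w (k + 1))
    (hle : ∀ k, 1 ≤ k → k ≤ n → c k ≤ a k * c (k - 1) + b k * c (k + 1)) :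
    ∀ k ≤ n + 1, c k = 0 := by
  have hw : ∀ k ≤ n, 0 < w k := by
    rintro (_ | _ | k) hk
    · simp [hw0]
    · simp [hw1]
    · exact hwpos (k + 1) (by omega) (by omega)
  have hstep : ∀ k, 1 ≤ k → k ≤ n → w k * c k ≤ w (k - 1) * b k * c (k + 1) := by
    intro k hk1
    induction k, hk1 using Nat.le_induction with
    | base =>
      intro hn
      simpa [hc0, hw0, hw1] using hle 1 le_rfl hn
    | succ k hk ih =>
      intro hkn
      have h1 := hle (k + 1) (by omega) hkn
      simp only [Nat.add_sub_cancel] at h1 ⊢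
      rw [hwrec k hk (by omega)]
      nlinarith [mul_le_mul_of_nonneg_left h1 (hw k (by omega)).le,
        mul_le_mul_of_nonneg_left (ih (by omega)) (ha (k + 1) (by omega) hkn)]
  intro k hk
  refine Nat.decreasingInduction (motive := fun k _ => c k = 0) (fun k _ ih => ?_) hcn hk
  rcases k with _ | k
  · exact hc0
  · have h := hstep (k + 1) (by omega) (by omega)
    rw [ih, mul_zero, ← mul_zero (w (k + 1))] at h
    exact le_antisymm (le_of_mul_le_mul_left h (hw _ (by omega))) (hc _)

def IsMatkowskiMeanOn (I : Set ℝ) (f g : ℝ → ℝ) (M : ℝ → ℝ → ℝ) : Prop :=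
  ∀ x ∈ I, ∀ y ∈ I, x ≤ y → M x y ∈ I ∧ f (M x y) + g (M x y) = f x + g y

namespace IsMatkowskiMeanOn

variable {I : Set ℝ} {f g : ℝ → ℝ} {M : ℝ → ℝ → ℝ}

theorem isMeanOn (hM : IsMatkowskiMeanOn I f g M) (hf : StrictMonoOn f I)
    (hg : StrictMonoOn g I) : IsMeanOn I M := by
  intro u hu v hv huv
  obtain ⟨hMI, hMeq⟩ := hM u hu v hv huv
  have hF := hf.add_monotone hg.monotoneOn
  constructor
  · refine (hF.le_iff_le hu hMI).1 ?_
    simp only [hMeq]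
    exact add_le_add le_rfl (hg.monotoneOn hu hv huv)
  · refine (hF.le_iff_le hMI hv).1 ?_
    simp only [hMeq]
    exact add_le_add (hf.monotoneOn hu hv huv) le_rfl

theorem mono (hM : IsMatkowskiMeanOn I f g M) (hf : StrictMonoOn f I) (hg : StrictMonoOn g I)
    {u v u' v' : ℝ} (hu : u ∈ I) (hv : v ∈ I) (hu' : u' ∈ I) (hv' : v' ∈ I) (huv : u ≤ v)
    (huv' : u' ≤ v') (hle : u ≤ u') (hle' : v ≤ v') : M u v ≤ M u' v' := by
  obtain ⟨hMI, hMeq⟩ := hM u hu v hv huv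
  obtain ⟨hMI', hMeq'⟩ := hM u' hu' v' hv' huv'
  refine ((hf.add_monotone hg.monotoneOn).le_iff_le hMI hMI').1 ?_
  simp only [hMeq, hMeq']
  exact add_le_add (hf.monotoneOn hu hu' hle) (hg.monotoneOn hv hv' hle')

theorem apply_min_mem_Icc (hM : IsMatkowskiMeanOn I f g M) (hf : StrictMonoOn f I)
    (hg : StrictMonoOn g I) {u v : ℝ} (hu : u ∈ I) (hv : v ∈ I) :
    M (min u v) v ∈ Icc (min u v) v :=
  hM.isMeanOn hf hg _ (min_rec' _ hu hv) _ hv (min_le_right _ _)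

theorem apply_min_le_apply_min (hM : IsMatkowskiMeanOn I f g M) (hf : StrictMonoOn f I)
    (hg : StrictMonoOn g I) {u v u' v' : ℝ} (hu : u ∈ I) (hv : v ∈ I) (hu' : u' ∈ I)
    (hv' : v' ∈ I) (hle : u ≤ u') (hle' : v ≤ v') : M (min u v) v ≤ M (min u' v') v' :=
  hM.mono hf hg (min_rec' _ hu hv) hv (min_rec' _ hu' hv') hv' (min_le_right _ _)
    (min_le_right _ _) (min_le_min hle hle') hle'

end IsMatkowskiMeanOn

section PadEnds

variable {n : ℕ} {x y : ℝ}

/-- The sequence `x, t 0, …, t (n - 1), y, y, …`, i.e. the paper's `t₀ = x`, `t_{n+1} = y`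
around `t = (t₁, …, tₙ)`. -/
def padEnds (x y : ℝ) (t : Fin n → ℝ) : ℕ → ℝ
  | 0 => x
  | k + 1 => if h : k < n then t ⟨k, h⟩ else y

@[simp]
theorem padEnds_zero (t : Fin n → ℝ) : padEnds x y t 0 = x := rfl

theorem padEnds_succ (t : Fin n → ℝ) {k : ℕ} (hk : k < n) : padEnds x y t (k + 1) = t ⟨k, hk⟩ :=
  dif_pos hk

@[simp]
theorem padEnds_fin_succ (t : Fin n → ℝ) (i : Fin n) : padEnds x y t (i + 1) = t i :=
  dif_pos i.isLt

theorem padEnds_of_lt (t : Fin n → ℝ) {k : ℕ} (hk : n < k) : padEnds x y t k = y := by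
  obtain ⟨k, rfl⟩ : ∃ j, k = j + 1 := ⟨k - 1, by omega⟩
  exact dif_neg (by omega)

theorem phiMap_apply (M : Fin n → ℝ → ℝ → ℝ) (t : Fin n → ℝ) (i : Fin n) :
    phiMap n M x y t i = M i (padEnds x y t i) (padEnds x y t (i + 2)) := by
  obtain ⟨i, hi⟩ := i
  simp only [phiMap]
  congr 1
  · split_ifs with h
    · simp [h]
    · obtain ⟨j, rfl⟩ : ∃ j, i = j + 1 := ⟨i - 1, by omega⟩
      exact (padEnds_succ t _).symm
  · split_ifs with h
    · exact (padEnds_of_lt t (by omega)).symm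
    · exact (padEnds_succ t _).symm

theorem padEnds_mem_Icc (hxy : x ≤ y) {t : Fin n → ℝ} (ht : ∀ i, t i ∈ Icc x y) (k : ℕ) :
    padEnds x y t k ∈ Icc x y := by
  rcases k with _ | k
  · exact left_mem_Icc.2 hxy
  · simp only [padEnds]
    split_ifs
    exacts [ht _, right_mem_Icc.2 hxy]

theorem padEnds_mem_Icc_of_monotone {t : Fin n → ℝ} (ht : Monotone (padEnds x y t)) (k : ℕ) :
    padEnds x y t k ∈ Icc x y :=
  ⟨ht (Nat.zero_le k), (ht (by omega : k ≤ k + n + 1)).trans_eq (padEnds_of_lt t (by omega))⟩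

theorem padEnds_le_padEnds {s t : Fin n → ℝ} (hst : s ≤ t) (k : ℕ) :
    padEnds x y s k ≤ padEnds x y t k := by
  rcases k with _ | k
  · exact le_rfl
  · simp only [padEnds]
    split_ifs
    exacts [hst _, le_rfl]

theorem continuous_padEnds_apply (k : ℕ) : Continuous fun t : Fin n → ℝ => padEnds x y t k := by
  rcases k with _ | k
  · exact continuous_const
  · simp only [padEnds]
    split_ifs
    exacts [continuous_apply _, continuous_const]

theorem monotone_padEnds_of_le (hxy : x ≤ y) {t : Fin n → ℝ} (hx : ∀ i, x ≤ t i)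
    (ht : ∀ i : Fin n, t i ≤ padEnds x y t (i + 2)) : Monotone (padEnds x y t) := by
  refine monotone_nat_of_le_succ fun k => ?_
  rcases k with _ | k
  · simp only [padEnds]
    split_ifs
    exacts [hx _, hxy]
  · by_cases hk : k < n
    · rw [padEnds_succ t hk]
      exact ht ⟨k, hk⟩
    · rw [padEnds_of_lt t (by omega), padEnds_of_lt t (by omega)]

theorem monotone_padEnds_iff (hxy : x ≤ y) {t : Fin n → ℝ} :
    Monotone (padEnds x y t) ↔ (∀ i, t i ∈ Icc x y) ∧ Monotone t := by
  constructor
  · intro h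
    refine ⟨fun i => ?_, fun i j hij => ?_⟩
    · simpa using padEnds_mem_Icc_of_monotone h (i + 1)
    · simpa using h (Nat.succ_le_succ hij)
  · rintro ⟨hbox, hmono⟩
    refine monotone_padEnds_of_le hxy (fun i => (hbox i).1) fun i => ?_
    by_cases hi : (i : ℕ) + 1 < n
    · rw [padEnds_succ t hi]
      exact hmono (Fin.mk_le_mk.2 (by omega) : i ≤ ⟨i + 1, hi⟩)
    · rw [padEnds_of_lt t (by omega)]
      exact (hbox i).2

end PadEnds

section FixedPoints

variable {I : Set ℝ} {n : ℕ} {f g : Fin n → ℝ → ℝ} {M : Fin n → ℝ → ℝ → ℝ} {x y : ℝ}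

theorem mem_phiFixedSet_iff (hM : ∀ i, IsMatkowskiMeanOn I (f i) (g i) (M i))
    (hfm : ∀ i, StrictMonoOn (f i) I) (hgm : ∀ i, StrictMonoOn (g i) I) (hxy : x ≤ y)
    (hsub : Icc x y ⊆ I) {t : Fin n → ℝ} :
    t ∈ phiFixedSet n M x y ↔ Monotone (padEnds x y t) ∧
      ∀ i, f i (t i) + g i (t i) = f i (padEnds x y t i) + g i (padEnds x y t (i + 2)) := by
  rw [phiFixedSet, mem_ofPred_eq, ← and_assoc, ← monotone_padEnds_iff hxy, funext_iff]
  refine and_congr_right fun hpad => forall_congr' fun i => ?_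
  have hmem k : padEnds x y t k ∈ I := hsub (padEnds_mem_Icc_of_monotone hpad k)
  obtain ⟨hMI, hMeq⟩ := hM i _ (hmem i) _ (hmem (i + 2)) (hpad (by omega))
  rw [phiMap_apply]
  constructor
  · intro h
    rwa [← h]
  · intro h
    exact ((hfm i).add_monotone (hgm i).monotoneOn).injOn hMI
      (by simpa using hmem (i + 1)) (hMeq.trans h.symm)

theorem phiFixedSet_nonempty (hM : ∀ i, IsMatkowskiMeanOn I (f i) (g i) (M i))
    (hfm : ∀ i, StrictMonoOn (f i) I) (hgm : ∀ i, StrictMonoOn (g i) I) (hxy : x ≤ y)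
    (hsub : Icc x y ⊆ I) : (phiFixedSet n M x y).Nonempty := by
  have : Fact (x ≤ y) := ⟨hxy⟩
  have hmem (s : Fin n → Icc x y) k : padEnds x y (Subtype.val ∘ s) k ∈ Icc x y :=
    padEnds_mem_Icc hxy (fun i => (s i).2) k
  let Φ : (Fin n → Icc x y) →o (Fin n → Icc x y) :=
    { toFun s i :=
        ⟨M i (min (padEnds x y (Subtype.val ∘ s) i) (padEnds x y (Subtype.val ∘ s) (i + 2)))
          (padEnds x y (Subtype.val ∘ s) (i + 2)),
          Icc_subset_Icc (le_min (hmem s i).1 (hmem s (i + 2)).1) (hmem s (i + 2)).2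
            ((hM i).apply_min_mem_Icc (hfm i) (hgm i) (hsub (hmem s i))
              (hsub (hmem s (i + 2))))⟩
      monotone' s s' hss' i :=
        (hM i).apply_min_le_apply_min (hfm i) (hgm i) (hsub (hmem s _)) (hsub (hmem s _))
          (hsub (hmem s' _)) (hsub (hmem s' _)) (padEnds_le_padEnds (fun j => hss' j) _)
          (padEnds_le_padEnds (fun j => hss' j) _) }
  set t : Fin n → ℝ := Subtype.val ∘ Φ.lfp
  have ht i : t i = M i (min (padEnds x y t i) (padEnds x y t (i + 2))) (padEnds x y t (i + 2)) :=
    congrArg Subtype.val (congrFun Φ.map_lfp i).symm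
  have hpad : Monotone (padEnds x y t) := by
    refine monotone_padEnds_of_le hxy (fun i => (Φ.lfp i).2.1) fun i => ?_
    rw [ht i]
    exact ((hM i).apply_min_mem_Icc (hfm i) (hgm i) (hsub (hmem _ i))
      (hsub (hmem _ (i + 2)))).2
  refine ⟨t, ?_⟩
  rw [phiFixedSet, mem_ofPred_eq, ← and_assoc, ← monotone_padEnds_iff hxy]
  refine ⟨hpad, funext fun i => ?_⟩
  rw [phiMap_apply, ht i, min_eq_left (hpad (by omega))]

theorem isClosed_phiFixedSet (hM : ∀ i, IsMatkowskiMeanOn I (f i) (g i) (M i))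
    (hfm : ∀ i, StrictMonoOn (f i) I) (hgm : ∀ i, StrictMonoOn (g i) I)
    (hfc : ∀ i, ContinuousOn (f i) I) (hgc : ∀ i, ContinuousOn (g i) I) (hxy : x ≤ y)
    (hsub : Icc x y ⊆ I) : IsClosed (phiFixedSet n M x y) := by
  set K := {t : Fin n → ℝ | Monotone (padEnds x y t)}
  have hK : IsClosed K := by
    simp only [K, Monotone, ofPred_forall]
    exact isClosed_iInter fun j => isClosed_iInter fun k => isClosed_iInter fun _ =>
      isClosed_le (continuous_padEnds_apply j) (continuous_padEnds_apply k)
  have hcont {h : ℝ → ℝ} (hh : ContinuousOn h I) k :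
      ContinuousOn (fun t => h (padEnds x y t k)) K :=
    hh.comp (continuous_padEnds_apply k).continuousOn
      fun t ht => hsub (padEnds_mem_Icc_of_monotone ht k)
  have hΦ : phiFixedSet n M x y = {t ∈ K |
      (fun i => f i (padEnds x y t (i + 1)) + g i (padEnds x y t (i + 1))) =
        fun i => f i (padEnds x y t i) + g i (padEnds x y t (i + 2))} := by
    ext t
    simp [mem_phiFixedSet_iff hM hfm hgm hxy hsub, funext_iff, K]
  rw [hΦ]
  exact hK.isClosed_eq (continuousOn_pi.2 fun i => (hcont (hfc i) _).add (hcont (hgc i) _))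
    (continuousOn_pi.2 fun i => (hcont (hfc i) _).add (hcont (hgc i) _))

theorem isCompact_phiFixedSet (hM : ∀ i, IsMatkowskiMeanOn I (f i) (g i) (M i))
    (hfm : ∀ i, StrictMonoOn (f i) I) (hgm : ∀ i, StrictMonoOn (g i) I)
    (hfc : ∀ i, ContinuousOn (f i) I) (hgc : ∀ i, ContinuousOn (g i) I) (hxy : x ≤ y)
    (hsub : Icc x y ⊆ I) : IsCompact (phiFixedSet n M x y) :=
  (isCompact_univ_pi fun _ => isCompact_Icc).of_isClosed_subset
    (isClosed_phiFixedSet hM hfm hgm hfc hgc hxy hsub) fun _ ht i _ => ht.1 i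

theorem abs_sub_le_of_mem_phiFixedSet (hM : ∀ i, IsMatkowskiMeanOn I (f i) (g i) (M i))
    (hfm : ∀ i, StrictMonoOn (f i) I) (hgm : ∀ i, StrictMonoOn (g i) I) (hxy : x ≤ y)
    (hsub : Icc x y ⊆ I) {ξ η : Fin n → ℝ} (hξ : ξ ∈ phiFixedSet n M x y)
    (hη : η ∈ phiFixedSet n M x y) (i : Fin n) :
    |(f i (ξ i) + g i (ξ i)) - (f i (η i) + g i (η i))| ≤
      |f i (padEnds x y ξ i) - f i (padEnds x y η i)| +
        |g i (padEnds x y ξ (i + 2)) - g i (padEnds x y η (i + 2))| := by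
  rw [((mem_phiFixedSet_iff hM hfm hgm hxy hsub).1 hξ).2 i,
    ((mem_phiFixedSet_iff hM hfm hgm hxy hsub).1 hη).2 i, add_sub_add_comm]
  exact abs_add_le _ _

theorem phiFixedSet_subsingleton (hM : ∀ i, IsMatkowskiMeanOn I (f i) (g i) (M i))
    (hfm : ∀ i, StrictMonoOn (f i) I) (hgm : ∀ i, StrictMonoOn (g i) I) (hxy : x < y)
    (hsub : Icc x y ⊆ I) (a b w : ℕ → ℝ)
    (ha : ∀ i j : Fin n, (j : ℕ) = i + 1 → ∀ u ∈ I, ∀ v ∈ I,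
      |f j u - f j v| ≤ a (j + 1) * |(f i u + g i u) - (f i v + g i v)|)
    (hb : ∀ i j : Fin n, (j : ℕ) = i + 1 → ∀ u ∈ I, ∀ v ∈ I,
      |g i u - g i v| ≤ b (i + 1) * |(f j u + g j u) - (f j v + g j v)|)
    (hw0 : w 0 = 1) (hw1 : w 1 = 1)
    (hwrec : ∀ i : ℕ, 1 ≤ i → i ≤ n - 1 → w (i + 1) = w i - a (i + 1) * b i * w (i - 1))
    (hwpos : ∀ i : ℕ, 1 ≤ i → i ≤ n - 1 → 0 < w (i + 1)) :
    (phiFixedSet n M x y).Subsingleton := by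
  intro ξ hξ η hη
  have hx : x ∈ I := hsub (left_mem_Icc.2 hxy.le)
  have hy : y ∈ I := hsub (right_mem_Icc.2 hxy.le)
  have hmem {t} (ht : t ∈ phiFixedSet n M x y) i : t i ∈ I := hsub (ht.1 i)
  set c := padEnds 0 0 fun i => |(f i (ξ i) + g i (ξ i)) - (f i (η i) + g i (η i))| with hc_def
  have hc k : 0 ≤ c k := by
    rcases k with _ | k
    · exact le_rfl
    · simp only [c, padEnds]
      split_ifs
      exacts [abs_nonneg _, le_rfl]
  have ha0 k (h1 : 2 ≤ k) (h2 : k ≤ n) : 0 ≤ a k := by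
    obtain ⟨j, rfl⟩ : ∃ j, k = j + 2 := ⟨k - 2, by omega⟩
    exact (pos_of_mul_pos_left ((abs_pos.2 (sub_ne_zero.2 ((hfm _) hx hy hxy).ne)).trans_le
      (ha ⟨j, by omega⟩ ⟨j + 1, h2⟩ rfl x hx y hy)) (abs_nonneg _)).le
  have hle k (h1 : 1 ≤ k) (h2 : k ≤ n) : c k ≤ a k * c (k - 1) + b k * c (k + 1) := by
    obtain ⟨j, rfl⟩ : ∃ j, k = j + 1 := ⟨k - 1, by omega⟩
    have hj : j < n := by omega
    rw [hc_def, padEnds_succ _ hj]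
    refine (abs_sub_le_of_mem_phiFixedSet hM hfm hgm hxy.le hsub hξ hη ⟨j, hj⟩).trans
      (add_le_add ?_ ?_)
    · rcases j with _ | j
      · simp
      · rw [padEnds_succ ξ (by omega), padEnds_succ η (by omega), Nat.add_sub_cancel,
          padEnds_succ _ (by omega)]
        exact ha ⟨j, by omega⟩ ⟨j + 1, hj⟩ rfl _ (hmem hξ _) _ (hmem hη _)
    · by_cases hjn : j + 1 < n
      · rw [padEnds_succ ξ hjn, padEnds_succ η hjn, padEnds_succ _ hjn]
        exact hb ⟨j, hj⟩ ⟨j + 1, hjn⟩ rfl _ (hmem hξ _) _ (hmem hη _)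
      · rw [padEnds_of_lt ξ (by simp; omega), padEnds_of_lt η (by simp; omega),
          padEnds_of_lt _ (by omega : n < j + 1 + 1)]
        simp
  have hc_zero := eq_zero_of_le_mul_pred_add_mul_succ hc rfl (padEnds_of_lt _ (by omega)) ha0
    hw0 hw1 hwrec hwpos hle
  funext i
  have hi : |(f i (ξ i) + g i (ξ i)) - (f i (η i) + g i (η i))| = 0 := by
    simpa [c] using hc_zero (i + 1) (by omega)
  exact ((hfm i).add_monotone (hgm i).monotoneOn).injOn (hmem hξ i) (hmem hη i)
    (sub_eq_zero.1 (abs_eq_zero.1 hi))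

end FixedPoints

/-- `a i` and `b i` bound the Lipschitz moduli, and `w (k + 1)` is the paper's `w_k`. -/
theorem stmt7 (I : Set ℝ) (hI : Set.OrdConnected I)
    (n : ℕ)
    (f g : Fin n → ℝ → ℝ)
    (hfm : ∀ i, StrictMonoOn (f i) I) (hgm : ∀ i, StrictMonoOn (g i) I)
    (hfc : ∀ i, ContinuousOn (f i) I) (hgc : ∀ i, ContinuousOn (g i) I)
    (M : Fin n → ℝ → ℝ → ℝ)
    (hM : ∀ i, ∀ x ∈ I, ∀ y ∈ I, x ≤ y →
      M i x y ∈ I ∧ f i (M i x y) + g i (M i x y) = f i x + g i y) :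
    (∀ x ∈ I, ∀ y ∈ I, x < y →
      (phiFixedSet n M x y).Nonempty ∧ IsCompact (phiFixedSet n M x y)) ∧
    (∀ a b w : ℕ → ℝ,
      (∀ i : ℕ, ∀ _h1 : 2 ≤ i, ∀ _h2 : i ≤ n, ∀ u ∈ I, ∀ v ∈ I,
        |f ⟨i - 1, by omega⟩ u - f ⟨i - 1, by omega⟩ v| ≤
          a i * |(f ⟨i - 2, by omega⟩ u + g ⟨i - 2, by omega⟩ u) -
                 (f ⟨i - 2, by omega⟩ v + g ⟨i - 2, by omega⟩ v)|) →
      (∀ i : ℕ, ∀ _h1 : 1 ≤ i, ∀ _h2 : i ≤ n - 1, ∀ u ∈ I, ∀ v ∈ I,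
        |g ⟨i - 1, by omega⟩ u - g ⟨i - 1, by omega⟩ v| ≤
          b i * |(f ⟨i, by omega⟩ u + g ⟨i, by omega⟩ u) -
                 (f ⟨i, by omega⟩ v + g ⟨i, by omega⟩ v)|) →
      w 0 = 1 → w 1 = 1 →
      (∀ i : ℕ, 1 ≤ i → i ≤ n - 1 → w (i + 1) = w i - a (i + 1) * b i * w (i - 1)) →
      (∀ i : ℕ, 1 ≤ i → i ≤ n - 1 → 0 < w (i + 1)) →
      ∀ x ∈ I, ∀ y ∈ I, x < y → ∃ ξ, phiFixedSet n M x y = {ξ}) := by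
  refine ⟨fun x hx y hy hxy => ⟨phiFixedSet_nonempty hM hfm hgm hxy.le (hI.out hx hy),
    isCompact_phiFixedSet hM hfm hgm hfc hgc hxy.le (hI.out hx hy)⟩, ?_⟩
  intro a b w ha hb hw0 hw1 hwrec hwpos x hx y hy hxy
  have ha' (i j : Fin n) (hij : (j : ℕ) = i + 1) u (hu : u ∈ I) v (hv : v ∈ I) :
      |f j u - f j v| ≤ a (j + 1) * |(f i u + g i u) - (f i v + g i v)| := by
    obtain ⟨i, hi⟩ := i
    obtain ⟨j, hj⟩ := j
    obtain rfl : j = i + 1 := hij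
    simpa using ha (i + 2) (by omega) hj u hu v hv
  have hb' (i j : Fin n) (hij : (j : ℕ) = i + 1) u (hu : u ∈ I) v (hv : v ∈ I) :
      |g i u - g i v| ≤ b (i + 1) * |(f j u + g j u) - (f j v + g j v)| := by
    obtain ⟨i, hi⟩ := i
    obtain ⟨j, hj⟩ := j
    obtain rfl : j = i + 1 := hij
    simpa using hb (i + 1) (by omega) (by omega) u hu v hv
  obtain ⟨ξ, hξ⟩ := phiFixedSet_nonempty hM hfm hgm hxy.le (hI.out hx hy)
  exact ⟨ξ, (phiFixedSet_subsingleton hM hfm hgm hxy (hI.out hx hy) a b w ha' hb' hw0 hw1 hwrec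
    hwpos).eq_singleton_of_mem hξ⟩
end

section
/- Let I ⊆ ℝ be a nonempty interval, n ≥ 2, s₁,…,sₙ ∈ (0,1), and let h : I → ℝ be a continuous strictly increasing function. For x < y in I, define φ_{(x,y)} on [x,y]ⁿ_≤ by φ_{(x,y)}(t₁,…,tₙ) := (M_{s₁h,(1−s₁)h}(x,t₂), M_{s₂h,(1−s₂)h}(t₁,t₃), …, M_{sₙh,(1−sₙ)h}(t_{n−1},y)). Then for every x < y in I the fixed point set Φ_{(x,y)} is exactly the singleton {(M_{σ₁h,(1−σ₁)h}(x,y), …, M_{σₙh,(1−σₙ)h}(x,y))}, where for i ∈ {1,…,n}, σᵢ := (Σ_{j=i}^{n} Π_{k=1}^{j} s_k/(1−s_k)) / (Σ_{j=0}^{n} Π_{k=1}^{j} s_k/(1−s_k)), with the empty product (j = 0) equal to 1. -/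
noncomputable def rrS9 (s : ℕ → ℝ) (k : ℕ) : ℝ := s k / (1 - s k)
noncomputable def PPS9 (s : ℕ → ℝ) (j : ℕ) : ℝ := ∏ k ∈ Finset.range j, rrS9 s k
noncomputable def SSS9 (s : ℕ → ℝ) (m : ℕ) : ℝ := ∑ j ∈ Finset.range m, PPS9 s j

lemma PPS9_pos {n : ℕ} {s : ℕ → ℝ} (hs : ∀ i < n, s i ∈ Set.Ioo (0:ℝ) 1)
    {j : ℕ} (hj : j ≤ n) : 0 < PPS9 s j := by
  apply Finset.prod_pos
  intro k hk
  have hk' : k < n := by have := Finset.mem_range.mp hk; omega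
  obtain ⟨h0, h1⟩ := hs k hk'
  exact div_pos h0 (by linarith)

lemma SSS9_succ (s : ℕ → ℝ) (m : ℕ) : SSS9 s (m+1) = SSS9 s m + PPS9 s m :=
  Finset.sum_range_succ _ _

lemma SSS9_zero (s : ℕ → ℝ) : SSS9 s 0 = 0 := rfl

lemma SSS9_lt {n : ℕ} {s : ℕ → ℝ} (hs : ∀ i < n, s i ∈ Set.Ioo (0:ℝ) 1)
    {a b : ℕ} (hab : a < b) (hb : b ≤ n + 1) : SSS9 s a < SSS9 s b := by
  apply Finset.sum_lt_sum_of_subset (Finset.range_subset_range.mpr hab.le)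
    (i := a) (by simp [hab]) (by simp) (PPS9_pos hs (by omega))
  intro j hj _
  exact (PPS9_pos hs (by have := Finset.mem_range.mp hj; omega)).le

lemma keyS9 {n : ℕ} {s : ℕ → ℝ} (hs : ∀ i < n, s i ∈ Set.Ioo (0:ℝ) 1)
    {i : ℕ} (hi : i < n) :
    s i * SSS9 s i + (1 - s i) * SSS9 s (i+2) = SSS9 s (i+1) := by
  obtain ⟨h0, h1⟩ := hs i hi
  have hne : (1 : ℝ) - s i ≠ 0 := by linarith
  have e1 : SSS9 s (i+1) = SSS9 s i + PPS9 s i := SSS9_succ s i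
  have eP : PPS9 s (i+1) = PPS9 s i * rrS9 s i := Finset.prod_range_succ _ _
  have e2 : SSS9 s (i+2) = SSS9 s i + PPS9 s i + PPS9 s i * rrS9 s i := by
    rw [SSS9_succ, eP, e1]
  have hrr : (1 - s i) * rrS9 s i = s i := by
    unfold rrS9; field_simp
  rw [e1, e2]
  linear_combination PPS9 s i * hrr

/-- For weighted quasi-arithmetic means `M i = M_{s_{i+1}h,(1-s_{i+1})h}`
(characterized by membership in `I` and `h (M i x y) = s i * h x + (1 - s i) * h y`;
here `s i` is the paper's `s_{i+1}`), the fixed point set `Φ_{(x,y)}` is exactly the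
singleton of the tuple of weighted quasi-arithmetic means with weights `σ₁,…,σₙ`. -/
theorem stmt9 (I : Set ℝ) (hI : Set.OrdConnected I) (hne : I.Nonempty)
    (n : ℕ) (hn : 2 ≤ n)
    (s : ℕ → ℝ) (hs : ∀ i < n, s i ∈ Set.Ioo (0 : ℝ) 1)
    (h : ℝ → ℝ) (hmono : StrictMonoOn h I) (hcont : ContinuousOn h I)
    (M : Fin n → ℝ → ℝ → ℝ)
    (hM : ∀ i : Fin n, ∀ x ∈ I, ∀ y ∈ I, x ≤ y →
      M i x y ∈ I ∧ h (M i x y) = s (i : ℕ) * h x + (1 - s (i : ℕ)) * h y)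
    (σ : ℕ → ℝ)
    (hσ : ∀ i, σ i =
      (∑ j ∈ Finset.Icc i n, ∏ k ∈ Finset.range j, s k / (1 - s k)) /
      (∑ j ∈ Finset.range (n + 1), ∏ k ∈ Finset.range j, s k / (1 - s k)))
    (N : Fin n → ℝ → ℝ → ℝ)
    (hN : ∀ i : Fin n, ∀ x ∈ I, ∀ y ∈ I, x ≤ y →
      N i x y ∈ I ∧ h (N i x y) = σ ((i : ℕ) + 1) * h x + (1 - σ ((i : ℕ) + 1)) * h y) :
    ∀ x ∈ I, ∀ y ∈ I, x < y →
      phiFixedSet n M x y = {fun i : Fin n => N i x y} := by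
  intro x hx y hy hxy
  have hIcc : Set.Icc x y ⊆ I := hI.out hx hy
  have huv : h x < h y := hmono hx hy hxy
  set D := SSS9 s (n+1) with hDdef
  have hD : 0 < D := by
    have := SSS9_lt hs (a := 0) (b := n+1) (by omega) le_rfl
    rw [SSS9_zero] at this
    linarith
  set d0 := (h y - h x) / D with hd0def
  have hd0 : 0 < d0 := div_pos (by linarith) hD
  have hDd : D * d0 = h y - h x := by
    rw [hd0def]; field_simp
  -- σ values
  have hσval : ∀ i : ℕ, i < n → σ (i+1) = 1 - SSS9 s (i+1) / D := by
    intro i hi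
    rw [hσ]
    have hsplit : ∑ j ∈ Finset.Icc (i+1) n, ∏ k ∈ Finset.range j, s k / (1 - s k)
        = D - SSS9 s (i+1) := by
      rw [← Finset.Ico_add_one_right_eq_Icc, Finset.sum_Ico_eq_sub _ (by omega)]
      rfl
    have hDr : (∑ j ∈ Finset.range (n+1), ∏ k ∈ Finset.range j, s k / (1 - s k)) = D := rfl
    rw [hsplit, hDr]
    field_simp
  -- value of N
  have hNval : ∀ i : Fin n, h (N i x y) = h x + SSS9 s ((i:ℕ)+1) * d0 := by
    intro i
    have hNi := (hN i x hx y hy hxy.le).2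
    rw [hσval i i.isLt] at hNi
    rw [hNi, hd0def]
    field_simp
    ring
  have hNmem : ∀ i : Fin n, N i x y ∈ I := fun i => (hN i x hx y hy hxy.le).1
  have hNlt : ∀ i : Fin n, x < N i x y ∧ N i x y < y := by
    intro i
    have hin := i.isLt
    have hS1 : 0 < SSS9 s ((i:ℕ)+1) := by
      have := SSS9_lt hs (a := 0) (b := (i:ℕ)+1) (by omega) (by omega)
      rw [SSS9_zero] at this; linarith
    have hS2 : SSS9 s ((i:ℕ)+1) < D := SSS9_lt hs (by omega) le_rfl
    have h1 : h x < h (N i x y) := by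
      rw [hNval i]; nlinarith
    have h2 : h (N i x y) < h y := by
      rw [hNval i]
      nlinarith
    exact ⟨(hmono.lt_iff_lt hx (hNmem i)).mp h1, (hmono.lt_iff_lt (hNmem i) hy).mp h2⟩
  -- the candidate is a fixed point
  have hmem_fixed : (∀ i : Fin n, N i x y ∈ Set.Icc x y) ∧
      Monotone (fun i : Fin n => N i x y) ∧
      phiMap n M x y (fun i : Fin n => N i x y) = fun i : Fin n => N i x y := by
    refine ⟨fun i => ⟨(hNlt i).1.le, (hNlt i).2.le⟩, ?_, ?_⟩
    · intro i j hij
      rcases eq_or_lt_of_le hij with rfl | hlt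
      · exact le_rfl
      · have hlt' : (i:ℕ) < (j:ℕ) := hlt
        have hjn := j.isLt
        refine ((hmono.lt_iff_lt (hNmem i) (hNmem j)).mp ?_).le
        rw [hNval i, hNval j]
        have : SSS9 s ((i:ℕ)+1) < SSS9 s ((j:ℕ)+1) := SSS9_lt hs (by omega) (by omega)
        nlinarith
    · funext i
      have hin := i.isLt
      have key : ∀ A B : ℝ, A ∈ I → B ∈ I → h A = h x + SSS9 s (i:ℕ) * d0 →
          h B = h x + SSS9 s ((i:ℕ)+2) * d0 → M i A B = N i x y := by
        intro A B hAI hBI hhA hhB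
        have hAB : A ≤ B := by
          refine (hmono.le_iff_le hAI hBI).mp ?_
          rw [hhA, hhB]
          have : SSS9 s (i:ℕ) < SSS9 s ((i:ℕ)+2) := SSS9_lt hs (by omega) (by omega)
          nlinarith
        obtain ⟨hMI, hMv⟩ := hM i A hAI B hBI hAB
        apply hmono.injOn hMI (hNmem i)
        rw [hMv, hhA, hhB, hNval i]
        have hk := keyS9 hs i.isLt
        linear_combination d0 * hk
      show M i _ _ = N i x y
      apply key
      · rcases eq_or_ne (i:ℕ) 0 with h0 | h0
        · rw [dif_pos h0]; exact hx
        · rw [dif_neg h0]; exact hNmem _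
      · rcases eq_or_ne (i:ℕ) (n-1) with h1 | h1
        · rw [dif_pos h1]; exact hy
        · rw [dif_neg h1]; exact hNmem _
      · rcases eq_or_ne (i:ℕ) 0 with h0 | h0
        · rw [dif_pos h0, h0, SSS9_zero]; ring
        · rw [dif_neg h0]
          have := hNval ⟨(i:ℕ)-1, by omega⟩
          simp only [Fin.val_mk] at this ⊢
          rw [this, show (i:ℕ) - 1 + 1 = (i:ℕ) by omega]
      · rcases eq_or_ne (i:ℕ) (n-1) with h1 | h1
        · rw [dif_pos h1, show (i:ℕ) + 2 = n + 1 by omega]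
          rw [← hDdef]
          linarith [hDd]
        · rw [dif_neg h1]
          have := hNval ⟨(i:ℕ)+1, by omega⟩
          simp only [Fin.val_mk] at this ⊢
          rw [this]
  -- conclude
  ext t
  simp only [phiFixedSet, Set.mem_setOf_eq, Set.mem_singleton_iff]
  constructor
  · rintro ⟨htIcc, htmono, htfix⟩
    have htI : ∀ i, t i ∈ I := fun i => hIcc (htIcc i)
    set z : ℕ → ℝ := fun j =>
      if hj : 1 ≤ j ∧ j ≤ n then h (t ⟨j-1, by omega⟩) else if j = 0 then h x else h y
      with hzdef
    have hz0 : z 0 = h x := by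
      simp only [hzdef]
      rw [dif_neg (by omega)]
      simp
    have hztop : z (n+1) = h y := by
      simp only [hzdef]
      rw [dif_neg (by omega), if_neg (by omega)]
    have hzmid : ∀ j : ℕ, (hj : j < n) → z (j+1) = h (t ⟨j, hj⟩) := by
      intro j hj
      simp only [hzdef]
      rw [dif_pos (by omega)]
      simp
    have hz : ∀ j : ℕ, 1 ≤ j → j ≤ n →
        z j = s (j-1) * z (j-1) + (1 - s (j-1)) * z (j+1) := by
      intro j hj1 hj2
      have hjn : j - 1 < n := by omega
      have hfix := congrFun htfix ⟨j-1, hjn⟩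
      simp only [phiMap, Fin.val_mk] at hfix
      have hzj : z j = h (t ⟨j-1, hjn⟩) := by
        have := hzmid (j-1) hjn
        rw [show j - 1 + 1 = j by omega] at this
        exact this
      have key : ∀ A B : ℝ, A ∈ I → B ∈ I → A ≤ B →
          M ⟨j-1, hjn⟩ A B = t ⟨j-1, hjn⟩ → h A = z (j-1) → h B = z (j+1) →
          z j = s (j-1) * z (j-1) + (1 - s (j-1)) * z (j+1) := by
        intro A B hAI hBI hAB hfix' hhA hhB
        obtain ⟨_, hMv⟩ := hM ⟨j-1, hjn⟩ A hAI B hBI hAB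
        simp only [Fin.val_mk] at hMv
        rw [hzj, ← hfix', hMv, hhA, hhB]
      refine key _ _ ?_ ?_ ?_ hfix ?_ ?_
      · rcases eq_or_ne (j-1) 0 with h0 | h0
        · rw [dif_pos h0]; exact hx
        · rw [dif_neg h0]; exact htI _
      · rcases eq_or_ne (j-1) (n-1) with h1 | h1
        · rw [dif_pos h1]; exact hy
        · rw [dif_neg h1]; exact htI _
      · rcases eq_or_ne (j-1) 0 with h0 | h0 <;>
          rcases eq_or_ne (j-1) (n-1) with h1 | h1
        · rw [dif_pos h0, dif_pos h1]; exact hxy.le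
        · rw [dif_pos h0, dif_neg h1]; exact (htIcc _).1
        · rw [dif_neg h0, dif_pos h1]; exact (htIcc _).2
        · rw [dif_neg h0, dif_neg h1]
          apply htmono
          simp only [Fin.mk_le_mk]
          omega
      · rcases eq_or_ne (j-1) 0 with h0 | h0
        · rw [dif_pos h0, h0, hz0]
        · rw [dif_neg h0]
          have := hzmid (j-1-1) (by omega)
          rw [show j - 1 - 1 + 1 = j - 1 by omega] at this
          rw [this]
      · rcases eq_or_ne (j-1) (n-1) with h1 | h1
        · rw [dif_pos h1, show j + 1 = n + 1 by omega, hztop]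
        · rw [dif_neg h1]
          have := hzmid (j-1+1) (by omega)
          rw [show j - 1 + 1 + 1 = j + 1 by omega] at this
          rw [this]
    have hstep : ∀ j, j < n → z (j+2) - z (j+1) = rrS9 s j * (z (j+1) - z j) := by
      intro j hj
      have hrec := hz (j+1) (by omega) (by omega)
      rw [show j + 1 - 1 = j by omega] at hrec
      obtain ⟨h0, h1⟩ := hs j hj
      have hne : (1:ℝ) - s j ≠ 0 := by linarith
      simp only [rrS9]
      field_simp
      linarith [hrec]
    have hdP : ∀ j, j ≤ n → z (j+1) - z j = PPS9 s j * (z 1 - z 0) := by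
      intro j
      induction j with
      | zero => intro _; simp [PPS9]
      | succ j ih =>
        intro hj
        rw [hstep j (by omega), ih (by omega)]
        have eP : PPS9 s (j+1) = PPS9 s j * rrS9 s j := Finset.prod_range_succ _ _
        rw [eP]; ring
    have htel : (z 1 - z 0) * D = h y - h x := by
      have h1 : ∑ j ∈ Finset.range (n+1), (z (j+1) - z j) = z (n+1) - z 0 :=
        Finset.sum_range_sub z (n+1)
      have h2 : ∑ j ∈ Finset.range (n+1), (z (j+1) - z j)
          = ∑ j ∈ Finset.range (n+1), PPS9 s j * (z 1 - z 0) := by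
        apply Finset.sum_congr rfl
        intro j hj
        exact hdP j (by have := Finset.mem_range.mp hj; omega)
      rw [h2, ← Finset.sum_mul, hz0, hztop] at h1
      have hDS : (∑ j ∈ Finset.range (n+1), PPS9 s j) = D := rfl
      rw [hDS] at h1
      rw [hz0]
      linear_combination h1
    have hd0eq : z 1 - z 0 = d0 := by
      rw [hd0def, eq_div_iff hD.ne']
      exact htel
    have hmain : ∀ m, m ≤ n + 1 → z m = h x + SSS9 s m * d0 := by
      intro m
      induction m with
      | zero => intro _; rw [hz0, SSS9_zero]; ring
      | succ m ih =>
        intro hm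
        have e1 := hdP m (by omega)
        rw [hd0eq] at e1
        have e2 := ih (by omega)
        rw [SSS9_succ]
        have : z (m+1) = z m + (z (m+1) - z m) := by ring
        rw [this, e1, e2]; ring
    funext i
    show t i = N i x y
    apply hmono.injOn (htI i) (hNmem i)
    have hzi := hzmid (i:ℕ) i.isLt
    rw [Fin.eta] at hzi
    rw [← hzi, hNval i]
    exact hmain ((i:ℕ)+1) (by have := i.isLt; omega)
  · rintro rfl
    exact hmem_fixed
end

section
/- Let I ⊆ ℝ be a nonempty interval, n ≥ 2, j ∈ {1,…,n}, and let p, q, h₁,…,h_{n−1} : I → ℝ be continuous strictly increasing functions; set h₀ := hₙ := 0. Define means Mᵢ := M_{p+h_{i−1}, hᵢ} for i ∈ {1,…,j−1}, M_j := M_{p+h_{j−1}, h_j+q}, and Mᵢ := M_{h_{i−1}, hᵢ+q} for i ∈ {j+1,…,n}. Then for every x < y in I, the fixed point set Φ_{(x,y)} of φ_{(x,y)} built from (M₁,…,Mₙ) is the singleton {(ξ₁,…,ξₙ)}, where ξ_j := M_{p,q}(x,y), ξᵢ := M_{p,hᵢ}(x, ξ_{i+1}) for i ∈ {1,…,j−1}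 (defined by downward recursion from j−1 to 1), and ξᵢ := M_{h_{i−1},q}(ξ_{i−1}, y) for i ∈ {j+1,…,n} (defined by upward recursion from j+1 to n). -/
open Classical in
noncomputable def sol (f : ℝ → ℝ) (a b c : ℝ) : ℝ :=
  if hEx : ∃ t ∈ Set.Icc a b, f t = c then hEx.choose else a

lemma sol_spec {f : ℝ → ℝ} {a b c : ℝ} (hEx : ∃ t ∈ Set.Icc a b, f t = c) :
    sol f a b c ∈ Set.Icc a b ∧ f (sol f a b c) = c := by
  unfold sol
  rw [dif_pos hEx]
  exact ⟨hEx.choose_spec.1, hEx.choose_spec.2⟩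

lemma exists_sol {I : Set ℝ} (hI : Set.OrdConnected I) {f : ℝ → ℝ}
    (hfc : ContinuousOn f I) {a b c : ℝ} (ha : a ∈ I) (hb : b ∈ I) (hab : a ≤ b)
    (hc1 : f a ≤ c) (hc2 : c ≤ f b) : ∃ t ∈ Set.Icc a b, f t = c := by
  obtain ⟨t, ht, hft⟩ :=
    intermediate_value_Icc hab (hfc.mono (hI.out ha hb)) (Set.mem_Icc.2 ⟨hc1, hc2⟩)
  exact ⟨t, ht, hft⟩


/-- For the Matkowski means `Mᵢ = M_{p+h_{i-1},hᵢ}` (`i < j`),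
`M_j = M_{p+h_{j-1},h_j+q}`, `Mᵢ = M_{h_{i-1},hᵢ+q}` (`i > j`) with `h₀ = hₙ = 0`
(here `M i` with `i : Fin n` is the paper's `M_{i+1}`, characterized by membership in `I`
and the defining Matkowski equation), the fixed point set `Φ_{(x,y)}` is the singleton
determined by `ξ_j = M_{p,q}(x,y)`, `ξᵢ = M_{p,hᵢ}(x,ξ_{i+1})` for `i < j` and
`ξᵢ = M_{h_{i-1},q}(ξ_{i-1},y)` for `i > j` (each `ξᵢ` characterized by the corresponding
Matkowski equation). -/
theorem stmt10 (I : Set ℝ) (hI : Set.OrdConnected I) (hne : I.Nonempty)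
    (n : ℕ) (hn : 2 ≤ n) (j : ℕ) (hj1 : 1 ≤ j) (hjn : j ≤ n)
    (p q : ℝ → ℝ)
    (hpm : StrictMonoOn p I) (hpc : ContinuousOn p I)
    (hqm : StrictMonoOn q I) (hqc : ContinuousOn q I)
    (h : ℕ → ℝ → ℝ) (hh0 : ∀ t, h 0 t = 0) (hhn : ∀ t, h n t = 0)
    (hhm : ∀ i : ℕ, 1 ≤ i → i ≤ n - 1 → StrictMonoOn (h i) I)
    (hhc : ∀ i : ℕ, 1 ≤ i → i ≤ n - 1 → ContinuousOn (h i) I)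
    (M : Fin n → ℝ → ℝ → ℝ)
    (hM : ∀ i : Fin n, ∀ x ∈ I, ∀ y ∈ I, x ≤ y →
      M i x y ∈ I ∧
        ((if (i : ℕ) + 1 ≤ j then p (M i x y) else 0) + h (i : ℕ) (M i x y)) +
            (h ((i : ℕ) + 1) (M i x y) + (if j ≤ (i : ℕ) + 1 then q (M i x y) else 0)) =
          ((if (i : ℕ) + 1 ≤ j then p x else 0) + h (i : ℕ) x) +
            (h ((i : ℕ) + 1) y + (if j ≤ (i : ℕ) + 1 then q y else 0))) :
    ∀ x ∈ I, ∀ y ∈ I, x < y →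
      ∃ ξ : ℕ → ℝ,
        (ξ j ∈ I ∧ p (ξ j) + q (ξ j) = p x + q y) ∧
        (∀ i : ℕ, 1 ≤ i → i < j →
          ξ i ∈ I ∧ p (ξ i) + h i (ξ i) = p x + h i (ξ (i + 1))) ∧
        (∀ i : ℕ, j < i → i ≤ n →
          ξ i ∈ I ∧ h (i - 1) (ξ i) + q (ξ i) = h (i - 1) (ξ (i - 1)) + q y) ∧
        phiFixedSet n M x y = {fun k : Fin n => ξ ((k : ℕ) + 1)} := by
  intro x hx y hy hxy
  have hxy' : x ≤ y := hxy.le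
  have hsub : Set.Icc x y ⊆ I := hI.out hx hy
  have hhmono : ∀ k, k ≤ n → MonotoneOn (h k) I := by
    intro k hk
    rcases eq_or_ne k 0 with rfl | hk0
    · intro a _ b _ _; simp [hh0]
    rcases eq_or_ne k n with rfl | hkn
    · intro a _ b _ _; simp [hhn]
    · exact (hhm k (by omega) (by omega)).monotoneOn
  have hhcont : ∀ k, k ≤ n → ContinuousOn (h k) I := by
    intro k hk
    rcases eq_or_ne k 0 with rfl | hk0
    · have e : h 0 = fun _ => (0:ℝ) := funext hh0
      rw [e]; exact continuousOn_const
    rcases eq_or_ne k n with hkn | hkn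
    · rw [hkn]
      have e : h n = fun _ => (0:ℝ) := funext hhn
      rw [e]; exact continuousOn_const
    · exact hhc k (by omega) (by omega)
  have hA : ∀ k, k ≤ n → StrictMonoOn (fun t => p t + h k t) I := fun k hk a ha b hb hab =>
    add_lt_add_of_lt_of_le (hpm ha hb hab) (hhmono k hk ha hb hab.le)
  have hAc : ∀ k, k ≤ n → ContinuousOn (fun t => p t + h k t) I := fun k hk =>
    hpc.add (hhcont k hk)
  have hB : ∀ k, k ≤ n → StrictMonoOn (fun t => h k t + q t) I := fun k hk a ha b hb hab =>
    add_lt_add_of_le_of_lt (hhmono k hk ha hb hab.le) (hqm ha hb hab)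
  have hBc : ∀ k, k ≤ n → ContinuousOn (fun t => h k t + q t) I := fun k hk =>
    (hhcont k hk).add hqc
  have hpq : StrictMonoOn (fun t => p t + q t) I := fun a ha b hb hab =>
    add_lt_add (hpm ha hb hab) (hqm ha hb hab)
  -- the middle value
  obtain ⟨ξj, hξjmem, hξjeq⟩ :
      ∃ z, z ∈ Set.Icc x y ∧ p z + q z = p x + q y := by
    obtain ⟨h1, h2⟩ := sol_spec (f := fun t => p t + q t)
      (exists_sol hI (hpc.add hqc) hx hy hxy'
        (by show p x + q x ≤ p x + q y; have := (hqm hx hy hxy).le; linarith)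
        (by show p x + q y ≤ p y + q y; have := (hpm hx hy hxy).le; linarith))
    exact ⟨_, h1, h2⟩
  -- generic one-step solvers
  have stepL : ∀ k, k ≤ n → ∀ a, a ∈ Set.Icc x y →
      sol (fun t => p t + h k t) x a (p x + h k a) ∈ Set.Icc x a ∧
      p (sol (fun t => p t + h k t) x a (p x + h k a)) +
        h k (sol (fun t => p t + h k t) x a (p x + h k a)) = p x + h k a := by
    intro k hk a ha
    exact sol_spec (f := fun t => p t + h k t)
      (exists_sol hI (hAc k hk) hx (hsub ha) ha.1
        (by show p x + h k x ≤ p x + h k a; have := hhmono k hk hx (hsub ha) ha.1; linarith)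
        (by show p x + h k a ≤ p a + h k a; have := hpm.monotoneOn hx (hsub ha) ha.1; linarith))
  have stepR : ∀ k, k ≤ n → ∀ a, a ∈ Set.Icc x y →
      sol (fun t => h k t + q t) a y (h k a + q y) ∈ Set.Icc a y ∧
      h k (sol (fun t => h k t + q t) a y (h k a + q y)) +
        q (sol (fun t => h k t + q t) a y (h k a + q y)) = h k a + q y := by
    intro k hk a ha
    exact sol_spec (f := fun t => h k t + q t)
      (exists_sol hI (hBc k hk) (hsub ha) hy ha.2
        (by show h k a + q a ≤ h k a + q y; have := hqm.monotoneOn (hsub ha) hy ha.2; linarith)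
        (by show h k a + q y ≤ h k y + q y; have := hhmono k hk (hsub ha) hy ha.2; linarith))
  -- downward recursion ζ and upward recursion ρ
  obtain ⟨ζ, hζ0, hζs⟩ : ∃ ζ : ℕ → ℝ, ζ 0 = ξj ∧
      ∀ m, ζ (m+1) = sol (fun t => p t + h (j - (m+1)) t) x (ζ m)
        (p x + h (j - (m+1)) (ζ m)) :=
    ⟨fun m => Nat.rec ξj
      (fun m prev => sol (fun t => p t + h (j - (m+1)) t) x prev
        (p x + h (j - (m+1)) prev)) m, rfl, fun m => rfl⟩
  obtain ⟨ρ, hρ0, hρs⟩ : ∃ ρ : ℕ → ℝ, ρ 0 = ξj ∧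
      ∀ m, ρ (m+1) = sol (fun t => h (j + m) t + q t) (ρ m) y
        (h (j + m) (ρ m) + q y) :=
    ⟨fun m => Nat.rec ξj
      (fun m prev => sol (fun t => h (j + m) t + q t) prev y
        (h (j + m) prev + q y)) m, rfl, fun m => rfl⟩
  have hζmem : ∀ m, ζ m ∈ Set.Icc x y := by
    intro m; induction m with
    | zero => rw [hζ0]; exact hξjmem
    | succ m ih =>
      obtain ⟨h1, h2⟩ := stepL (j - (m+1)) (by omega) (ζ m) ih
      rw [hζs m]
      exact ⟨h1.1, h1.2.trans ih.2⟩
  have hζspec : ∀ m, ζ (m+1) ∈ Set.Icc x (ζ m) ∧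
      p (ζ (m+1)) + h (j - (m+1)) (ζ (m+1)) = p x + h (j - (m+1)) (ζ m) := by
    intro m
    rw [hζs m]
    exact stepL (j - (m+1)) (by omega) (ζ m) (hζmem m)
  have hρmem : ∀ m, j + m ≤ n → ρ m ∈ Set.Icc x y := by
    intro m; induction m with
    | zero => intro _; rw [hρ0]; exact hξjmem
    | succ m ih =>
      intro hmn
      have ihm := ih (by omega)
      obtain ⟨h1, h2⟩ := stepR (j + m) (by omega) (ρ m) ihm
      rw [hρs m]
      exact ⟨le_trans ihm.1 h1.1, h1.2⟩
  have hρspec : ∀ m, j + (m+1) ≤ n → ρ (m+1) ∈ Set.Icc (ρ m) y ∧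
      h (j + m) (ρ (m+1)) + q (ρ (m+1)) = h (j + m) (ρ m) + q y := by
    intro m hmn
    rw [hρs m]
    exact stepR (j + m) (by omega) (ρ m) (hρmem m (by omega))
  -- the sequence ξ
  obtain ⟨ξ, hξle, hξgt⟩ : ∃ ξ : ℕ → ℝ,
      (∀ i, i ≤ j → ξ i = ζ (j - i)) ∧ (∀ i, j < i → ξ i = ρ (i - j)) :=
    ⟨fun i => if i ≤ j then ζ (j - i) else ρ (i - j),
      fun i hi => if_pos hi, fun i hi => if_neg (by omega)⟩
  have hξjfact : ξ j = ξj := by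
    rw [hξle j le_rfl, Nat.sub_self, hζ0]
  have hξmemj : ∀ i, 1 ≤ i → i ≤ n → ξ i ∈ Set.Icc x y := by
    intro i h1 h2
    rcases le_or_gt i j with hij | hij
    · rw [hξle i hij]; exact hζmem _
    · rw [hξgt i hij]; exact hρmem (i - j) (by omega)
  have hξI : ∀ i, 1 ≤ i → i ≤ n → ξ i ∈ I := fun i h1 h2 => hsub (hξmemj i h1 h2)
  have Eleft : ∀ i, 1 ≤ i → i < j → ξ i ∈ Set.Icc x (ξ (i+1)) ∧
      p (ξ i) + h i (ξ i) = p x + h i (ξ (i+1)) := by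
    intro i h1 h2
    have e1 : ξ i = ζ (j - i) := hξle i h2.le
    have e2 : ξ (i+1) = ζ (j - (i+1)) := hξle (i+1) (by omega)
    have e3 : j - i = (j - (i+1)) + 1 := by omega
    have hsp := hζspec (j - (i+1))
    have e4 : j - (j - (i + 1) + 1) = i := by omega
    rw [e4] at hsp
    rw [e1, e2, e3]
    exact hsp
  have Eright : ∀ i, j < i → i ≤ n → ξ i ∈ Set.Icc (ξ (i-1)) y ∧
      h (i-1) (ξ i) + q (ξ i) = h (i-1) (ξ (i-1)) + q y := by
    intro i h2 h3
    have e1 : ξ i = ρ (i - j) := hξgt i h2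
    have e2 : ξ (i-1) = ρ (i - 1 - j) := by
      rcases Nat.lt_or_ge j (i-1) with hj' | hj'
      · exact hξgt (i-1) hj'
      · have hij : i - 1 = j := by omega
        rw [hij, hξle j le_rfl, Nat.sub_self, hζ0, ← hρ0]
    have e3 : i - j = (i - 1 - j) + 1 := by omega
    have hsp := hρspec (i - 1 - j) (by omega)
    have e5 : j + (i - 1 - j) = i - 1 := by omega
    rw [e5] at hsp
    rw [e1, e2, e3]
    exact hsp
  have hξmono : ∀ i, 1 ≤ i → i < n → ξ i ≤ ξ (i+1) := by
    intro i h1 h2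
    rcases lt_or_ge i j with hij | hij
    · exact (Eleft i h1 hij).1.2
    · have := (Eright (i+1) (by omega) (by omega)).1.1
      rwa [Nat.add_sub_cancel] at this
  have hchain : ∀ a, 1 ≤ a → ∀ b, a ≤ b → b ≤ n → ξ a ≤ ξ b := by
    intro a ha b hab
    induction b, hab using Nat.le_induction with
    | base => intro _; exact le_rfl
    | succ b hb ih =>
      intro hbn
      exact le_trans (ih (by omega)) (hξmono b (by omega) (by omega))
  refine ⟨ξ, ⟨hξI j hj1 hjn, by rw [hξjfact]; exact hξjeq⟩, ?_, ?_, ?_⟩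
  · intro i h1 h2
    exact ⟨hξI i h1 (by omega), (Eleft i h1 h2).2⟩
  · intro i h1 h2
    exact ⟨hξI i (by omega) h2, (Eright i h1 h2).2⟩
  -- strict monotonicity of the combined Matkowski generator
  have hG : ∀ i : Fin n, StrictMonoOn (fun u =>
      ((if (i:ℕ) + 1 ≤ j then p u else 0) + h (i:ℕ) u) +
        (h ((i:ℕ)+1) u + (if j ≤ (i:ℕ) + 1 then q u else 0))) I := by
    intro i a ha b hb hab
    have hin : (i:ℕ) < n := i.isLt
    have hhk := hhmono (i:ℕ) (by omega) ha hb hab.le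
    have hhk1 := hhmono ((i:ℕ)+1) (by omega) ha hb hab.le
    show ((if (i:ℕ) + 1 ≤ j then p a else 0) + h (i:ℕ) a) +
        (h ((i:ℕ)+1) a + (if j ≤ (i:ℕ) + 1 then q a else 0)) <
      ((if (i:ℕ) + 1 ≤ j then p b else 0) + h (i:ℕ) b) +
        (h ((i:ℕ)+1) b + (if j ≤ (i:ℕ) + 1 then q b else 0))
    rcases le_or_gt ((i:ℕ)+1) j with hkj | hkj
    · have hp := hpm ha hb hab
      have hq : (if j ≤ (i:ℕ)+1 then q a else 0) ≤ (if j ≤ (i:ℕ)+1 then q b else 0) := by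
        split
        · exact (hqm ha hb hab).le
        · exact le_rfl
      simp only [if_pos hkj]
      linarith
    · have hq := hqm ha hb hab
      simp only [if_pos (show j ≤ (i:ℕ)+1 by omega), if_neg (show ¬ ((i:ℕ)+1 ≤ j) by omega)]
      linarith
  have hMval : ∀ i : Fin n, ∀ a, a ∈ I → ∀ b, b ∈ I → a ≤ b → ∀ z, z ∈ I →
      ((if (i:ℕ)+1 ≤ j then p z else 0) + h (i:ℕ) z) +
        (h ((i:ℕ)+1) z + (if j ≤ (i:ℕ)+1 then q z else 0)) =
      ((if (i:ℕ)+1 ≤ j then p a else 0) + h (i:ℕ) a) +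
        (h ((i:ℕ)+1) b + (if j ≤ (i:ℕ)+1 then q b else 0)) →
      M i a b = z := by
    intro i a ha b hb hab z hz hzeq
    obtain ⟨hmem2, heq⟩ := hM i a ha b hb hab
    exact (hG i).injOn hmem2 hz (heq.trans hzeq.symm)
  -- the elementwise fixed-point identity for the candidate ξ
  have Key : ∀ i : Fin n, ∀ L R : ℝ,
      (((i:ℕ) = 0 ∧ L = x) ∨ (1 ≤ (i:ℕ) ∧ L = ξ (i:ℕ))) →
      (((i:ℕ) = n - 1 ∧ R = y) ∨ ((i:ℕ) + 1 < n ∧ R = ξ ((i:ℕ) + 2))) →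
      M i L R = ξ ((i:ℕ) + 1) := by
    intro i L R hL hR
    have hin : (i:ℕ) < n := i.isLt
    have hLI : L ∈ I := by
      rcases hL with ⟨_, rfl⟩ | ⟨h1, rfl⟩
      · exact hx
      · exact hξI _ h1 (by omega)
    have hRI : R ∈ I := by
      rcases hR with ⟨_, rfl⟩ | ⟨h1, rfl⟩
      · exact hy
      · exact hξI _ (by omega) (by omega)
    have hLR : L ≤ R := by
      rcases hL with ⟨h1, rfl⟩ | ⟨h1, rfl⟩ <;> rcases hR with ⟨h2, rfl⟩ | ⟨h2, rfl⟩
      · exact hxy'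
      · exact (hξmemj _ (by omega) (by omega)).1
      · exact (hξmemj _ h1 (by omega)).2
      · exact hchain _ h1 _ (by omega) (by omega)
    apply hMval i L hLI R hRI hLR _ (hξI _ (by omega) (by omega))
    rcases lt_trichotomy ((i:ℕ)+1) j with hkj | hkj | hkj
    · -- strictly below j
      simp only [if_pos (le_of_lt hkj), if_neg (show ¬ j ≤ (i:ℕ)+1 by omega)]
      obtain ⟨h2, rfl⟩ : (i:ℕ)+1 < n ∧ R = ξ ((i:ℕ)+2) := by
        rcases hR with ⟨he, _⟩ | hR'
        · omega
        · exact hR'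
      have E1 := (Eleft ((i:ℕ)+1) (by omega) hkj).2
      rw [show (i:ℕ)+1+1 = (i:ℕ)+2 by omega] at E1
      rcases hL with ⟨hi0, rfl⟩ | ⟨h1, rfl⟩
      · rw [hi0] at E1 ⊢
        simp only [hh0]
        linarith
      · have E0 := (Eleft ((i:ℕ)) h1 (by omega)).2
        linarith
    · -- equal to j
      simp only [if_pos (le_of_eq hkj), if_pos (le_of_eq hkj.symm)]
      have Emid : p (ξ ((i:ℕ)+1)) + q (ξ ((i:ℕ)+1)) = p x + q y := by
        rw [hkj, hξjfact]; exact hξjeq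
      have L2 : p x + h (i:ℕ) (ξ ((i:ℕ)+1)) = p L + h (i:ℕ) L := by
        rcases hL with ⟨hi0, rfl⟩ | ⟨h1, rfl⟩
        · rw [hi0]
          simp only [hh0]
        · have E0 := (Eleft ((i:ℕ)) h1 (by omega)).2
          linarith
      have R2 : q y + h ((i:ℕ)+1) (ξ ((i:ℕ)+1)) = q R + h ((i:ℕ)+1) R := by
        rcases hR with ⟨he, rfl⟩ | ⟨he, rfl⟩
        · have hn' : (i:ℕ)+1 = n := by omega
          rw [hn', hhn, hhn]
        · have E2 := (Eright ((i:ℕ)+2) (by omega) (by omega)).2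
          rw [show (i:ℕ)+2-1 = (i:ℕ)+1 by omega] at E2
          linarith
      linarith
    · -- strictly above j
      simp only [if_neg (show ¬ ((i:ℕ)+1 ≤ j) by omega), if_pos (show j ≤ (i:ℕ)+1 by omega)]
      obtain ⟨h1, rfl⟩ : 1 ≤ (i:ℕ) ∧ L = ξ (i:ℕ) := by
        rcases hL with ⟨he, _⟩ | hL'
        · omega
        · exact hL'
      have E1 := (Eright ((i:ℕ)+1) (by omega) (by omega)).2
      rw [show (i:ℕ)+1-1 = (i:ℕ) by omega] at E1
      rcases hR with ⟨he, rfl⟩ | ⟨he, rfl⟩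
      · have hn' : (i:ℕ)+1 = n := by omega
        rw [hn'] at E1 ⊢
        simp only [hhn]
        linarith
      · have E2 := (Eright ((i:ℕ)+2) (by omega) (by omega)).2
        rw [show (i:ℕ)+2-1 = (i:ℕ)+1 by omega] at E2
        linarith
  apply Set.eq_singleton_iff_unique_mem.mpr
  constructor
  · -- ξ gives a fixed point
    refine ⟨?_, ?_, ?_⟩
    · intro i
      exact hξmemj ((i:ℕ)+1) (by omega) i.isLt
    · intro a b hab
      exact hchain ((a:ℕ)+1) (by omega) ((b:ℕ)+1)
        (by exact Nat.add_le_add_right (Fin.le_def.mp hab) 1) b.isLt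
    · funext i
      have hin : (i:ℕ) < n := i.isLt
      simp only [phiMap]
      rcases eq_or_ne ((i:ℕ)) 0 with hi0 | hi0 <;>
        rcases eq_or_ne ((i:ℕ)) (n-1) with hin1 | hin1
      · omega
      · rw [dif_pos hi0, dif_neg hin1]
        exact Key i _ _ (Or.inl ⟨hi0, rfl⟩) (Or.inr ⟨by omega, rfl⟩)
      · rw [dif_neg hi0, dif_pos hin1]
        refine Key i _ _ (Or.inr ⟨by omega, ?_⟩) (Or.inl ⟨hin1, rfl⟩)
        show ξ ((i:ℕ)-1+1) = ξ (i:ℕ)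
        rw [show (i:ℕ)-1+1 = (i:ℕ) by omega]
      · rw [dif_neg hi0, dif_neg hin1]
        refine Key i _ _ (Or.inr ⟨by omega, ?_⟩) (Or.inr ⟨by omega, rfl⟩)
        show ξ ((i:ℕ)-1+1) = ξ (i:ℕ)
        rw [show (i:ℕ)-1+1 = (i:ℕ) by omega]
  · -- uniqueness
    rintro t ⟨hmem, hmono, hfix⟩
    obtain ⟨τ, hτ0, hτt, hτtop⟩ : ∃ τ : ℕ → ℝ, τ 0 = x ∧
        (∀ k, 1 ≤ k → ∀ hk2 : k ≤ n, τ k = t ⟨k-1, by omega⟩) ∧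
        (∀ k, n < k → τ k = y) := by
      refine ⟨fun k => if k = 0 then x else if hk : k ≤ n then t ⟨k-1, by omega⟩ else y,
        rfl, ?_, ?_⟩
      · intro k hk hk2
        dsimp only
        rw [if_neg (show ¬ k = 0 by omega), dif_pos hk2]
      · intro k hk
        dsimp only
        rw [if_neg (show ¬ k = 0 by omega), dif_neg (show ¬ k ≤ n by omega)]
    have τmem : ∀ k, k ≤ n+1 → τ k ∈ Set.Icc x y := by
      intro k hk
      rcases Nat.eq_zero_or_pos k with rfl | hk1
      · rw [hτ0]; exact ⟨le_rfl, hxy'⟩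
      rcases Nat.lt_or_ge n k with hk2 | hk2
      · rw [hτtop k hk2]; exact ⟨hxy', le_rfl⟩
      · rw [hτt k hk1 hk2]; exact hmem _
    have τI : ∀ k, k ≤ n+1 → τ k ∈ I := fun k hk => hsub (τmem k hk)
    have EqI : ∀ i : Fin n,
        ((if (i:ℕ)+1 ≤ j then p (τ ((i:ℕ)+1)) else 0) + h (i:ℕ) (τ ((i:ℕ)+1))) +
          (h ((i:ℕ)+1) (τ ((i:ℕ)+1)) + (if j ≤ (i:ℕ)+1 then q (τ ((i:ℕ)+1)) else 0)) =
        ((if (i:ℕ)+1 ≤ j then p (τ (i:ℕ)) else 0) + h (i:ℕ) (τ (i:ℕ))) +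
          (h ((i:ℕ)+1) (τ ((i:ℕ)+2)) + (if j ≤ (i:ℕ)+1 then q (τ ((i:ℕ)+2)) else 0)) := by
      intro i
      have hin : (i:ℕ) < n := i.isLt
      have hfx := congrFun hfix i
      simp only [phiMap] at hfx
      have hti : τ ((i:ℕ)+1) = t i := by
        rw [hτt ((i:ℕ)+1) (by omega) (by omega)]
        exact congrArg t (Fin.ext (by simp))
      rcases eq_or_ne ((i:ℕ)) 0 with hi0 | hi0 <;>
        rcases eq_or_ne ((i:ℕ)) (n-1) with hin1 | hin1
      · omega
      · rw [dif_pos hi0, dif_neg hin1] at hfx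
        have e0 : τ (i:ℕ) = x := by rw [hi0, hτ0]
        have e2 : τ ((i:ℕ)+2) = t ⟨(i:ℕ)+1, by omega⟩ :=
          hτt ((i:ℕ)+2) (by omega) (by omega)
        obtain ⟨hMm, hMe⟩ := hM i x hx (t ⟨(i:ℕ)+1, by omega⟩)
          (hsub (hmem _)) (hmem _).1
        rw [hfx] at hMe
        rw [hti, e0, e2]
        exact hMe
      · rw [dif_neg hi0, dif_pos hin1] at hfx
        have e0 : τ (i:ℕ) = t ⟨(i:ℕ)-1, by omega⟩ := hτt (i:ℕ) (by omega) (by omega)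
        have e2 : τ ((i:ℕ)+2) = y := hτtop _ (by omega)
        obtain ⟨hMm, hMe⟩ := hM i (t ⟨(i:ℕ)-1, by omega⟩) (hsub (hmem _)) y hy (hmem _).2
        rw [hfx] at hMe
        rw [hti, e0, e2]
        exact hMe
      · rw [dif_neg hi0, dif_neg hin1] at hfx
        have e0 : τ (i:ℕ) = t ⟨(i:ℕ)-1, by omega⟩ := hτt (i:ℕ) (by omega) (by omega)
        have e2 : τ ((i:ℕ)+2) = t ⟨(i:ℕ)+1, by omega⟩ :=
          hτt ((i:ℕ)+2) (by omega) (by omega)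
        have hle : t ⟨(i:ℕ)-1, by omega⟩ ≤ t ⟨(i:ℕ)+1, by omega⟩ := by
          apply hmono
          rw [Fin.mk_le_mk]
          omega
        obtain ⟨hMm, hMe⟩ := hM i (t ⟨(i:ℕ)-1, by omega⟩) (hsub (hmem _))
          (t ⟨(i:ℕ)+1, by omega⟩) (hsub (hmem _)) hle
        rw [hfx] at hMe
        rw [hti, e0, e2]
        exact hMe
    have U : ∀ k, k < j → p (τ k) + h k (τ k) = p x + h k (τ (k+1)) := by
      intro k
      induction k with
      | zero =>
        intro _
        rw [hτ0]
        simp [hh0]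
      | succ k ih =>
        intro hk
        have E : ((if k+1 ≤ j then p (τ (k+1)) else 0) + h k (τ (k+1))) +
            (h (k+1) (τ (k+1)) + (if j ≤ k+1 then q (τ (k+1)) else 0)) =
          ((if k+1 ≤ j then p (τ k) else 0) + h k (τ k)) +
            (h (k+1) (τ (k+2)) + (if j ≤ k+1 then q (τ (k+2)) else 0)) :=
          EqI ⟨k, by omega⟩
        simp only [if_pos (show k+1 ≤ j by omega), if_neg (show ¬ j ≤ k+1 by omega)] at E
        have := ih (by omega)
        linarith
    have V : ∀ d k, n - k = d → j ≤ k → k ≤ n →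
        h k (τ (k+1)) + q (τ (k+1)) = h k (τ k) + q y := by
      intro d
      induction d with
      | zero =>
        intro k hd h1 h2
        have hk : k = n := by omega
        subst hk
        rw [hτtop (k+1) (by omega)]
        simp [hhn]
      | succ d ih =>
        intro k hd h1 h2
        have hkn : k < n := by omega
        have E : ((if k+1 ≤ j then p (τ (k+1)) else 0) + h k (τ (k+1))) +
            (h (k+1) (τ (k+1)) + (if j ≤ k+1 then q (τ (k+1)) else 0)) =
          ((if k+1 ≤ j then p (τ k) else 0) + h k (τ k)) +
            (h (k+1) (τ (k+2)) + (if j ≤ k+1 then q (τ (k+2)) else 0)) :=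
          EqI ⟨k, hkn⟩
        simp only [if_neg (show ¬ (k+1 ≤ j) by omega), if_pos (show j ≤ k+1 by omega)] at E
        have hnext := ih (k+1) (by omega) (by omega) (by omega)
        linarith
    have hτj : τ j = ξ j := by
      have E : ((if (j-1)+1 ≤ j then p (τ ((j-1)+1)) else 0) + h (j-1) (τ ((j-1)+1))) +
          (h ((j-1)+1) (τ ((j-1)+1)) + (if j ≤ (j-1)+1 then q (τ ((j-1)+1)) else 0)) =
        ((if (j-1)+1 ≤ j then p (τ (j-1)) else 0) + h (j-1) (τ (j-1))) +
          (h ((j-1)+1) (τ ((j-1)+2)) + (if j ≤ (j-1)+1 then q (τ ((j-1)+2)) else 0)) :=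
        EqI ⟨j-1, by omega⟩
      rw [show (j-1)+1 = j by omega, show (j-1)+2 = j+1 by omega] at E
      simp only [if_pos (le_refl j)] at E
      have hU := U (j-1) (by omega)
      rw [show (j-1)+1 = j by omega] at hU
      have hV := V (n - j) j rfl le_rfl hjn
      refine hpq.injOn (τI j (by omega)) (hξI j hj1 hjn) ?_
      show p (τ j) + q (τ j) = p (ξ j) + q (ξ j)
      rw [hξjfact]
      rw [hξjeq]
      linarith
    have Tle : ∀ k, 1 ≤ k → k ≤ j → τ k = ξ k := by
      have Tdown : ∀ d, d ≤ j - 1 → τ (j - d) = ξ (j - d) := by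
        intro d
        induction d with
        | zero => intro _; exact hτj
        | succ d ih =>
          intro hd
          have hk1 : 1 ≤ j - (d+1) := by omega
          have e : j - (d+1) + 1 = j - d := by omega
          have hU := U (j - (d+1)) (by omega)
          rw [e, ih (by omega)] at hU
          have hE := (Eleft (j - (d+1)) hk1 (by omega)).2
          rw [e] at hE
          refine (hA (j - (d+1)) (by omega)).injOn (τI _ (by omega)) (hξI _ hk1 (by omega)) ?_
          show p (τ (j-(d+1))) + h (j-(d+1)) (τ (j-(d+1))) =
            p (ξ (j-(d+1))) + h (j-(d+1)) (ξ (j-(d+1)))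
          linarith
      intro k h1 h2
      have := Tdown (j - k) (by omega)
      rwa [show j - (j - k) = k by omega] at this
    have Tup : ∀ k, j ≤ k → k ≤ n → τ k = ξ k := by
      intro k hk
      induction k, hk using Nat.le_induction with
      | base => intro _; exact Tle j hj1 le_rfl
      | succ k hk ih =>
        intro hk2
        have hV := V (n - k) k rfl hk (by omega)
        rw [ih (by omega)] at hV
        have hE := (Eright (k+1) (by omega) hk2).2
        rw [show k+1-1 = k by omega] at hE
        refine (hB k (by omega)).injOn (τI (k+1) (by omega)) (hξI (k+1) (by omega) hk2) ?_
        show h k (τ (k+1)) + q (τ (k+1)) = h k (ξ (k+1)) + q (ξ (k+1))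
        linarith
    funext i
    have hiv : t i = τ ((i:ℕ)+1) := by
      rw [hτt ((i:ℕ)+1) (by omega) (by have := i.isLt; omega)]
      exact (congrArg t (Fin.ext (by simp))).symm
    show t i = ξ ((i:ℕ)+1)
    rw [hiv]
    rcases le_or_gt ((i:ℕ)+1) j with hij | hij
    · exact Tle _ (by omega) hij
    · exact Tup _ (by omega) i.isLt
end

section
/- Let D ⊆ ℝ and f : D → ℝ̄ where ℝ̄ = ℝ ∪ {−∞,+∞}. Then for all n ∈ ℕ, all points x₀ < x₁ < ⋯ < x_{n+1} in D, and all i ∈ {1,…,n}: min_{1 ≤ j ≤ n} ⌊x_{j−1}, x_j, x_{j+1}; f⌋ ≤ ⌊x₀, x_i, x_{n+1}; f⌋ ≤ ⌈x₀, x_i, x_{n+1}; f⌉ ≤ max_{1 ≤ j ≤ n} ⌈x_{j−1}, x_j, x_{j+1}; f⌉. -/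
open Classical in
/-- The lower sum `x ∔ y` on the extended reals: `x + y` if both are `> -∞`
(with `(+∞) ∔ (+∞) = +∞`), and `-∞` as soon as one summand is `-∞`. -/
noncomputable def lsum (a b : EReal) : EReal := if a = ⊥ ∨ b = ⊥ then ⊥ else a + b

open Classical in
/-- The upper sum `x ⊎ y` on the extended reals: `x + y` if both are `< +∞`
(with `(-∞) ⊎ (-∞) = -∞`), and `+∞` as soon as one summand is `+∞`. -/
noncomputable def usum (a b : EReal) : EReal := if a = ⊤ ∨ b = ⊤ then ⊤ else a + b

/-- The lower second-order divided difference `⌊x,y,z;f⌋`. -/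
noncomputable def ldd (f : ℝ → EReal) (x y z : ℝ) : EReal :=
  lsum (lsum (((1 / ((y - x) * (z - x)) : ℝ) : EReal) * f x)
             (((1 / ((x - y) * (z - y)) : ℝ) : EReal) * f y))
       (((1 / ((x - z) * (y - z)) : ℝ) : EReal) * f z)

/-- The upper second-order divided difference `⌈x,y,z;f⌉`. -/
noncomputable def udd (f : ℝ → EReal) (x y z : ℝ) : EReal :=
  usum (usum (((1 / ((y - x) * (z - x)) : ℝ) : EReal) * f x)
             (((1 / ((x - y) * (z - y)) : ℝ) : EReal) * f y))
       (((1 / ((x - z) * (y - z)) : ℝ) : EReal) * f z)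

/-- `f : I → ℝ̄` is lower `M`-convex: `⌊x, M(x,y), y; f⌋ ≥ 0` for all `x < y` in `I`. -/
def LowerConvexWrt (I : Set ℝ) (M : ℝ → ℝ → ℝ) (f : ℝ → EReal) : Prop :=
  ∀ x ∈ I, ∀ y ∈ I, x < y → 0 ≤ ldd f x (M x y) y

/-- `f : I → ℝ̄` is upper `M`-convex: `⌈x, M(x,y), y; f⌉ ≥ 0` for all `x < y` in `I`. -/
def UpperConvexWrt (I : Set ℝ) (M : ℝ → ℝ → ℝ) (f : ℝ → EReal) : Prop :=
  ∀ x ∈ I, ∀ y ∈ I, x < y → 0 ≤ udd f x (M x y) y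

/-!
For `a < b < c < d`, the divided differences `⌊a,b,d⌋` and `⌊a,c,d⌋` obtained by dropping an
interior point are convex combinations of `⌊a,b,c⌋` and `⌊b,c,d⌋`, hence at least their minimum.
Infinite values do not spoil this: unless that minimum is `-∞`, the two small divided differences
force `f b`, `f c` to be finite and `f a`, `f d` to be `> -∞`, so the large one is either `+∞` or
finite, and in the finite case the real identity applies. Induction on the span of indices then
carries the minimum over consecutive triples to every triple of the chain. The upper inequality is
the lower one for `-f`, since `⌈x,y,z;f⌉ = -⌊x,y,z;-f⌋`.
-/

theorem min_le_div_mul_add_div_mul {P Q u v w : ℝ} (hu : 0 ≤ u) (hv : 0 ≤ v) (hw : 0 < w)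
    (h : u + v = w) : min P Q ≤ u / w * P + v / w * Q :=
  calc min P Q = u / w * min P Q + v / w * min P Q := by
        rw [← add_mul, ← add_div, h, div_self hw.ne', one_mul]
    _ ≤ u / w * P + v / w * Q := by gcongr; exacts [min_le_left P Q, min_le_right P Q]

noncomputable def divDiff2 (g : ℝ → ℝ) (x y z : ℝ) : ℝ :=
  1 / ((y - x) * (z - x)) * g x + 1 / ((x - y) * (z - y)) * g y + 1 / ((x - z) * (y - z)) * g z

section FourPoints

variable {a b c d : ℝ}

theorem divDiff2_erase_third (g : ℝ → ℝ) (hab : a < b) (hbc : b < c) (hcd : c < d) :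
    divDiff2 g a b d =
      (c - a) / (d - a) * divDiff2 g a b c + (d - c) / (d - a) * divDiff2 g b c d := by
  have hac := hab.trans hbc
  have hbd := hbc.trans hcd
  have had := hac.trans hcd
  unfold divDiff2
  field_simp [sub_ne_zero.2 hab.ne, sub_ne_zero.2 hab.ne', sub_ne_zero.2 hbc.ne,
    sub_ne_zero.2 hbc.ne', sub_ne_zero.2 hcd.ne, sub_ne_zero.2 hcd.ne', sub_ne_zero.2 hac.ne,
    sub_ne_zero.2 hac.ne', sub_ne_zero.2 hbd.ne, sub_ne_zero.2 hbd.ne', sub_ne_zero.2 had.ne,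
    sub_ne_zero.2 had.ne']
  ring

theorem divDiff2_erase_second (g : ℝ → ℝ) (hab : a < b) (hbc : b < c) (hcd : c < d) :
    divDiff2 g a c d =
      (b - a) / (d - a) * divDiff2 g a b c + (d - b) / (d - a) * divDiff2 g b c d := by
  have hac := hab.trans hbc
  have hbd := hbc.trans hcd
  have had := hac.trans hcd
  unfold divDiff2
  field_simp [sub_ne_zero.2 hab.ne, sub_ne_zero.2 hab.ne', sub_ne_zero.2 hbc.ne,
    sub_ne_zero.2 hbc.ne', sub_ne_zero.2 hcd.ne, sub_ne_zero.2 hcd.ne', sub_ne_zero.2 hac.ne,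
    sub_ne_zero.2 hac.ne', sub_ne_zero.2 hbd.ne, sub_ne_zero.2 hbd.ne', sub_ne_zero.2 had.ne,
    sub_ne_zero.2 had.ne']
  ring

theorem min_divDiff2_le (g : ℝ → ℝ) {m : ℝ} (hab : a < b) (hbc : b < c) (hcd : c < d)
    (hm : m = b ∨ m = c) : min (divDiff2 g a b c) (divDiff2 g b c d) ≤ divDiff2 g a m d := by
  have had : 0 < d - a := by linarith
  rcases hm with rfl | rfl
  · rw [divDiff2_erase_third g hab hbc hcd]
    exact min_le_div_mul_add_div_mul (by linarith) (by linarith) had (by ring)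
  · rw [divDiff2_erase_second g hab hbc hcd]
    exact min_le_div_mul_add_div_mul (by linarith) (by linarith) had (by ring)

end FourPoints

namespace EReal

variable {c : ℝ} {u : EReal}

theorem coe_mul_ne_bot_iff_of_pos (hc : 0 < c) : (c : EReal) * u ≠ ⊥ ↔ u ≠ ⊥ := by
  simp [mul_ne_bot, hc.le, hc.not_ge]

theorem coe_mul_ne_bot_iff_of_neg (hc : c < 0) : (c : EReal) * u ≠ ⊥ ↔ u ≠ ⊤ := by
  simp [mul_ne_bot, hc.le, hc.not_ge]

theorem coe_mul_ne_top_iff_of_pos (hc : 0 < c) : (c : EReal) * u ≠ ⊤ ↔ u ≠ ⊤ := by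
  simp [mul_ne_top, hc.le, hc.not_ge]

theorem coe_mul_ne_top_iff_of_neg (hc : c < 0) : (c : EReal) * u ≠ ⊤ ↔ u ≠ ⊥ := by
  simp [mul_ne_top, hc.le, hc.not_ge]

end EReal

-- `EReal` addition already makes `⊥` absorbing (`⊥ + ⊤ = ⊥`).
theorem lsum_eq_add (a b : EReal) : lsum a b = a + b := by
  unfold lsum
  split_ifs with h
  · rcases h with rfl | rfl <;> simp
  · rfl

theorem ldd_eq_add (f : ℝ → EReal) (x y z : ℝ) : ldd f x y z =
    ((1 / ((y - x) * (z - x)) : ℝ) : EReal) * f x +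
    ((1 / ((x - y) * (z - y)) : ℝ) : EReal) * f y +
    ((1 / ((x - z) * (y - z)) : ℝ) : EReal) * f z := by
  rw [ldd, lsum_eq_add, lsum_eq_add]

section ThreePoints

variable {x y z : ℝ}

theorem ldd_coeff_left_pos (hxy : x < y) (hyz : y < z) : 0 < 1 / ((y - x) * (z - x)) :=
  one_div_pos.2 (mul_pos (sub_pos.2 hxy) (sub_pos.2 (hxy.trans hyz)))

theorem ldd_coeff_mid_neg (hxy : x < y) (hyz : y < z) : 1 / ((x - y) * (z - y)) < 0 :=
  one_div_neg.2 (mul_neg_of_neg_of_pos (sub_neg.2 hxy) (sub_pos.2 hyz))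

theorem ldd_coeff_right_pos (hxy : x < y) (hyz : y < z) : 0 < 1 / ((x - z) * (y - z)) :=
  one_div_pos.2 (mul_pos_of_neg_of_neg (sub_neg.2 (hxy.trans hyz)) (sub_neg.2 hyz))

variable {f : ℝ → EReal}

theorem ldd_ne_bot_iff (hxy : x < y) (hyz : y < z) :
    ldd f x y z ≠ ⊥ ↔ f x ≠ ⊥ ∧ f y ≠ ⊤ ∧ f z ≠ ⊥ := by
  rw [ldd_eq_add, EReal.add_ne_bot_iff, EReal.add_ne_bot_iff,
    EReal.coe_mul_ne_bot_iff_of_pos (ldd_coeff_left_pos hxy hyz),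
    EReal.coe_mul_ne_bot_iff_of_neg (ldd_coeff_mid_neg hxy hyz),
    EReal.coe_mul_ne_bot_iff_of_pos (ldd_coeff_right_pos hxy hyz), and_assoc]

theorem ldd_ne_top (hxy : x < y) (hyz : y < z) (hbot : ldd f x y z ≠ ⊥)
    (htop : ldd f x y z ≠ ⊤) : f x ≠ ⊤ ∧ f y ≠ ⊥ ∧ f z ≠ ⊤ := by
  rw [ldd_eq_add] at hbot htop
  obtain ⟨hxy', hz⟩ := EReal.add_ne_bot_iff.1 hbot
  obtain ⟨hx, hy⟩ := EReal.add_ne_bot_iff.1 hxy'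
  rwa [EReal.add_ne_top_iff_ne_top₂ hxy' hz, EReal.add_ne_top_iff_ne_top₂ hx hy,
    EReal.coe_mul_ne_top_iff_of_pos (ldd_coeff_left_pos hxy hyz),
    EReal.coe_mul_ne_top_iff_of_neg (ldd_coeff_mid_neg hxy hyz),
    EReal.coe_mul_ne_top_iff_of_pos (ldd_coeff_right_pos hxy hyz), and_assoc] at htop

theorem ldd_eq_coe_divDiff2 {g : ℝ → ℝ} (hx : f x = g x) (hy : f y = g y) (hz : f z = g z) :
    ldd f x y z = divDiff2 g x y z := by
  simp only [ldd_eq_add, hx, hy, hz, divDiff2, EReal.coe_add, EReal.coe_mul]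

end ThreePoints

theorem min_ldd_le (f : ℝ → EReal) {a b c d m : ℝ} (hab : a < b) (hbc : b < c) (hcd : c < d)
    (hm : m = b ∨ m = c) : min (ldd f a b c) (ldd f b c d) ≤ ldd f a m d := by
  have ham : a < m := by rcases hm with rfl | rfl <;> linarith
  have hmd : m < d := by rcases hm with rfl | rfl <;> linarith
  rcases eq_or_ne (min (ldd f a b c) (ldd f b c d)) ⊥ with h | h
  · exact h ▸ bot_le
  obtain ⟨ha, hbtop, hcbot⟩ := (ldd_ne_bot_iff hab hbc).1 (ne_bot_of_le_ne_bot h (min_le_left _ _))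
  obtain ⟨hbbot, hctop, hd⟩ := (ldd_ne_bot_iff hbc hcd).1 (ne_bot_of_le_ne_bot h (min_le_right _ _))
  have hmbot : f m ≠ ⊥ := by rcases hm with rfl | rfl <;> assumption
  have hmtop : f m ≠ ⊤ := by rcases hm with rfl | rfl <;> assumption
  rcases eq_or_ne (ldd f a m d) ⊤ with h' | h'
  · exact h' ▸ le_top
  obtain ⟨hatop, -, hdtop⟩ := ldd_ne_top ham hmd ((ldd_ne_bot_iff ham hmd).2 ⟨ha, hmtop, hd⟩) h'
  set g : ℝ → ℝ := fun t ↦ (f t).toReal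
  have hg {t : ℝ} (hbot : f t ≠ ⊥) (htop : f t ≠ ⊤) : f t = g t :=
    (EReal.coe_toReal htop hbot).symm
  rw [ldd_eq_coe_divDiff2 (hg ha hatop) (hg hbbot hbtop) (hg hcbot hctop),
    ldd_eq_coe_divDiff2 (hg hbbot hbtop) (hg hcbot hctop) (hg hd hdtop),
    ldd_eq_coe_divDiff2 (hg ha hatop) (hg hmbot hmtop) (hg hd hdtop),
    ← EReal.coe_strictMono.monotone.map_min, EReal.coe_le_coe_iff]
  exact min_divDiff2_le g hab hbc hcd hm

theorem neg_usum (a b : EReal) : -usum a b = lsum (-a) (-b) := by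
  unfold lsum usum
  split_ifs <;> simp_all [EReal.neg_add, sub_eq_add_neg]

theorem udd_eq_neg_ldd_neg (f : ℝ → EReal) (x y z : ℝ) : udd f x y z = -ldd (-f) x y z := by
  simp only [ldd, udd, Pi.neg_apply, mul_neg, ← neg_usum, neg_neg]

theorem lsum_le_usum (a b : EReal) : lsum a b ≤ usum a b := by
  unfold lsum usum
  split_ifs <;> simp

theorem usum_mono_left {a a' : EReal} (h : a ≤ a') (b : EReal) : usum a b ≤ usum a' b := by
  unfold usum
  split_ifs <;> simp_all
  gcongr

theorem ldd_le_udd (f : ℝ → EReal) (x y z : ℝ) : ldd f x y z ≤ udd f x y z :=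
  (lsum_le_usum _ _).trans (usum_mono_left (lsum_le_usum _ _) _)

theorem le_of_le_consecutive_triples {α : Type*} [Preorder α] {N : ℕ} {g : ℕ → ℕ → ℕ → α}
    {μ : α} (hg : ∀ a b c d, a < b → b < c → c < d → d ≤ N → μ ≤ g a b c → μ ≤ g b c d →
      μ ≤ g a b d ∧ μ ≤ g a c d)
    (hμ : ∀ j, j + 2 ≤ N → μ ≤ g j (j + 1) (j + 2)) {a b c : ℕ} (hab : a < b) (hbc : b < c)
    (hc : c ≤ N) : μ ≤ g a b c := by
  obtain ⟨rfl, rfl⟩ | hb | ⟨rfl, hc'⟩ :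
      b = a + 1 ∧ c = a + 2 ∨ a + 1 < b ∨ b = a + 1 ∧ b + 1 < c := by omega
  · exact hμ a hc
  · exact (hg a (a + 1) b c (by omega) hb hbc hc
      (le_of_le_consecutive_triples hg hμ (by omega) hb (by omega))
      (le_of_le_consecutive_triples hg hμ hb hbc hc)).2
  · exact (hg a (a + 1) (c - 1) c hab (by omega) (by omega) hc
      (le_of_le_consecutive_triples hg hμ hab (by omega) (by omega))
      (le_of_le_consecutive_triples hg hμ (by omega) (by omega) hc)).1
termination_by c - a

theorem le_ldd_of_le_ldd_consecutive (f : ℝ → EReal) {x : ℕ → ℝ} {N : ℕ}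
    (hx : StrictMonoOn x (Set.Iic N)) {μ : EReal}
    (hμ : ∀ j, j + 2 ≤ N → μ ≤ ldd f (x j) (x (j + 1)) (x (j + 2))) {a b c : ℕ} (hab : a < b)
    (hbc : b < c) (hc : c ≤ N) : μ ≤ ldd f (x a) (x b) (x c) := by
  refine le_of_le_consecutive_triples (g := fun a b c ↦ ldd f (x a) (x b) (x c)) ?_ hμ hab hbc hc
  intro a b c d hab hbc hcd hd h₁ h₂
  have hx' {k l : ℕ} (hkl : k < l) (hl : l ≤ N) : x k < x l :=
    hx (Set.mem_Iic.2 (by omega)) (Set.mem_Iic.2 hl) hkl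
  have hdrop {m : ℝ} (hm : m = x b ∨ m = x c) : μ ≤ ldd f (x a) m (x d) :=
    (le_min h₁ h₂).trans (min_ldd_le f (hx' hab (by omega)) (hx' hbc (by omega)) (hx' hcd hd) hm)
  exact ⟨hdrop (.inl rfl), hdrop (.inr rfl)⟩

theorem stmt11_general (f : ℝ → EReal) (n : ℕ) (hn : 1 ≤ n)
    (x : ℕ → ℝ)
    (hxlt : ∀ k ≤ n, x k < x (k + 1))
    (i : ℕ) (hi1 : 1 ≤ i) (hi2 : i ≤ n) :
    (Finset.Icc 1 n).inf' (Finset.nonempty_Icc.mpr hn)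
        (fun j => ldd f (x (j - 1)) (x j) (x (j + 1))) ≤
      ldd f (x 0) (x i) (x (n + 1)) ∧
    ldd f (x 0) (x i) (x (n + 1)) ≤ udd f (x 0) (x i) (x (n + 1)) ∧
    udd f (x 0) (x i) (x (n + 1)) ≤
      (Finset.Icc 1 n).sup' (Finset.nonempty_Icc.mpr hn)
        (fun j => udd f (x (j - 1)) (x j) (x (j + 1))) := by
  have hx : StrictMonoOn x (Set.Iic (n + 1)) :=
    strictMonoOn_Iic_of_lt_succ fun k hk ↦ hxlt k (by omega)
  have chain (h : ℝ → EReal) (μ : EReal)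
      (hμ : ∀ j ∈ Finset.Icc 1 n, μ ≤ ldd h (x (j - 1)) (x j) (x (j + 1))) :
      μ ≤ ldd h (x 0) (x i) (x (n + 1)) :=
    le_ldd_of_le_ldd_consecutive h hx
      (fun j hj ↦ hμ (j + 1) (Finset.mem_Icc.2 ⟨by omega, by omega⟩)) (by omega) (by omega) le_rfl
  refine ⟨chain f _ fun j hj ↦ Finset.inf'_le _ hj, ldd_le_udd f _ _ _, ?_⟩
  rw [udd_eq_neg_ldd_neg, EReal.neg_le]
  refine chain (-f) _ fun j hj ↦ ?_
  rw [EReal.neg_le, ← udd_eq_neg_ldd_neg]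
  exact Finset.le_sup' (fun j ↦ udd f (x (j - 1)) (x j) (x (j + 1))) hj

/-- **Extended Chain Inequality.** For `f : D → ℝ̄` and
`x₀ < x₁ < ⋯ < x_{n+1}` in `D`, and `1 ≤ i ≤ n`:
`min_j ⌊x_{j-1},x_j,x_{j+1};f⌋ ≤ ⌊x₀,x_i,x_{n+1};f⌋ ≤ ⌈x₀,x_i,x_{n+1};f⌉ ≤
max_j ⌈x_{j-1},x_j,x_{j+1};f⌉`. -/
theorem stmt11 (D : Set ℝ) (f : ℝ → EReal) (n : ℕ) (hn : 1 ≤ n)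
    (x : ℕ → ℝ) (hxD : ∀ k ≤ n + 1, x k ∈ D)
    (hxlt : ∀ k ≤ n, x k < x (k + 1))
    (i : ℕ) (hi1 : 1 ≤ i) (hi2 : i ≤ n) :
    (Finset.Icc 1 n).inf' (Finset.nonempty_Icc.mpr hn)
        (fun j => ldd f (x (j - 1)) (x j) (x (j + 1))) ≤
      ldd f (x 0) (x i) (x (n + 1)) ∧
    ldd f (x 0) (x i) (x (n + 1)) ≤ udd f (x 0) (x i) (x (n + 1)) ∧
    udd f (x 0) (x i) (x (n + 1)) ≤
      (Finset.Icc 1 n).sup' (Finset.nonempty_Icc.mpr hn)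
        (fun j => udd f (x (j - 1)) (x j) (x (j + 1))) :=
  stmt11_general f n hn x hxlt i hi1 hi2
end
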